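/- arXiv:2111.00889 — 5 statements merged into one kernel-verified Lean document; each statement's English description precedes it below -/
import Mathlib

section
/- Let F be a connected GSC, x a cut point of F and n ∈ ℤ⁺. The following are equivalent: (1) no pair of distinct words ω, τ ∈ D^n \ Ω_n(x) is well separated by x; (2) there exists p ∈ ℤ⁺ such that E_n(x) is contained in a single connected component of E_{n+p}(x). -/
open Set Topology

noncomputable def phi (N : ℕ) (i : ℕ × ℕ) (p : ℝ × ℝ) : ℝ × ℝ :=
  ((p.1 + (i.1 : ℝ)) / (N : ℝ), (p.2 + (i.2 : ℝ)) / (N : ℝ))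

noncomputable def phiW (N : ℕ) (l : List (ℕ × ℕ)) : ℝ × ℝ → ℝ × ℝ :=
  l.foldr (fun i g => phi N i ∘ g) id

lemma phiW_nil (N : ℕ) : phiW N [] = id := rfl
lemma phiW_cons (N : ℕ) (i : ℕ × ℕ) (l : List (ℕ × ℕ)) :
    phiW N (i :: l) = phi N i ∘ phiW N l := rfl

lemma phiW_append (N : ℕ) (l m : List (ℕ × ℕ)) :
    phiW N (l ++ m) = phiW N l ∘ phiW N m := by
  induction l with
  | nil => rfl
  | cons a t ih => simp [List.cons_append, phiW_cons, ih, Function.comp_assoc]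

lemma continuous_phi (N : ℕ) (i : ℕ × ℕ) : Continuous (phi N i) := by
  unfold phi; fun_prop

lemma continuous_phiW (N : ℕ) (l : List (ℕ × ℕ)) : Continuous (phiW N l) := by
  induction l with
  | nil => exact continuous_id
  | cons a t ih => exact (continuous_phi N a).comp ih

def valc (N : ℕ) (c : ℕ × ℕ → ℕ) : List (ℕ × ℕ) → ℕ
  | [] => 0
  | d :: t => c d * N ^ t.length + valc N c t

lemma valc_lt (N : ℕ) (hN : 1 ≤ N) (c : ℕ × ℕ → ℕ) (l : List (ℕ × ℕ))
    (h : ∀ a ∈ l, c a < N) : valc N c l < N ^ l.length := by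
  induction l with
  | nil => simpa [valc] using Nat.one_le_iff_ne_zero.mp (by positivity)
  | cons d t ih =>
    have h1 : c d * N ^ t.length + valc N c t < (c d + 1) * N ^ t.length := by
      have := ih (fun a ha => h a (List.mem_cons_of_mem _ ha))
      nlinarith
    have h2 : (c d + 1) * N ^ t.length ≤ N * N ^ t.length :=
      Nat.mul_le_mul_right _ (h d (List.mem_cons_self))
    calc valc N c (d :: t) = c d * N ^ t.length + valc N c t := rfl
      _ < (c d + 1) * N ^ t.length := h1
      _ ≤ N ^ (d :: t).length := by simpa [pow_succ, mul_comm] using h2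

lemma phiW_eq (N : ℕ) (hN : 0 < N) (l : List (ℕ × ℕ)) (p : ℝ × ℝ) :
    phiW N l p = ((p.1 + (valc N Prod.fst l : ℝ)) / (N : ℝ) ^ l.length,
      (p.2 + (valc N Prod.snd l : ℝ)) / (N : ℝ) ^ l.length) := by
  have hN' : (N : ℝ) ≠ 0 := Nat.cast_ne_zero.mpr hN.ne'
  induction l with
  | nil => simp [phiW_nil, valc]
  | cons d t ih =>
    have hP : ((N : ℝ) ^ t.length) ≠ 0 := by positivity
    simp only [phiW_cons, Function.comp_apply, ih, phi, valc, List.length_cons]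
    rw [Prod.mk.injEq]
    constructor <;> · push_cast; field_simp; ring

lemma valc_comp_inj (N : ℕ) (hN : 1 ≤ N) :
    ∀ l l' : List (ℕ × ℕ), l.length = l'.length →
    (∀ a ∈ l, a.1 < N ∧ a.2 < N) → (∀ a ∈ l', a.1 < N ∧ a.2 < N) →
    valc N Prod.fst l = valc N Prod.fst l' →
    valc N Prod.snd l = valc N Prod.snd l' → l = l' := by
  intro l
  induction l with
  | nil =>
    intro l' hlen _ _ _ _
    exact (List.length_eq_zero_iff.mp hlen.symm).symm
  | cons d t ih =>
    intro l' hlen hd hd' h1 h2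
    rcases l' with _ | ⟨e, s⟩
    · simp at hlen
    have hts : t.length = s.length := by simpa using hlen
    have hM : 0 < N ^ t.length := Nat.pow_pos hN
    have key : ∀ c : ℕ × ℕ → ℕ, (∀ a ∈ d :: t, c a < N) → (∀ a ∈ e :: s, c a < N) →
        valc N c (d :: t) = valc N c (e :: s) → c d = c e ∧ valc N c t = valc N c s := by
      intro c hc hc' h
      have hvt : valc N c t < N ^ t.length :=
        valc_lt N hN c t (fun a ha => hc a (List.mem_cons_of_mem _ ha))
      have hvs : valc N c s < N ^ t.length := by
        rw [hts]
        exact valc_lt N hN c s (fun a ha => hc' a (List.mem_cons_of_mem _ ha))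
      have h' : c d * N ^ t.length + valc N c t = c e * N ^ t.length + valc N c s := by
        simpa [valc, hts] using h
      have hmod : valc N c t = valc N c s := by
        have e1 : (c d * N ^ t.length + valc N c t) % N ^ t.length = valc N c t := by
          rw [mul_comm, Nat.mul_add_mod, Nat.mod_eq_of_lt hvt]
        have e2 : (c e * N ^ t.length + valc N c s) % N ^ t.length = valc N c s := by
          rw [mul_comm, Nat.mul_add_mod, Nat.mod_eq_of_lt hvs]
        rw [← e1, ← e2, h']
      refine ⟨?_, hmod⟩
      have : c d * N ^ t.length = c e * N ^ t.length := by omega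
      exact Nat.eq_of_mul_eq_mul_right hM this
    have k1 := key Prod.fst (fun a ha => (hd a ha).1) (fun a ha => (hd' a ha).1) h1
    have k2 := key Prod.snd (fun a ha => (hd a ha).2) (fun a ha => (hd' a ha).2) h2
    have hde : d = e := Prod.ext k1.1 k2.1
    have hts' : t = s := ih s hts (fun a ha => hd a (List.mem_cons_of_mem _ ha))
      (fun a ha => hd' a (List.mem_cons_of_mem _ ha)) k1.2 k2.2
    rw [hde, hts']

def Words (D : Finset (ℕ × ℕ)) (k : ℕ) : Set (List (ℕ × ℕ)) :=
  {l | l.length = k ∧ ∀ a ∈ l, a ∈ D}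

def GoodDigits (N : ℕ) (D : Finset (ℕ × ℕ)) : Prop :=
  2 ≤ N ∧ (∀ i ∈ D, i.1 < N ∧ i.2 < N) ∧ 1 < D.card ∧ D.card < N ^ 2

def IsAttractor (N : ℕ) (D : Finset (ℕ × ℕ)) (F : Set (ℝ × ℝ)) : Prop :=
  F.Nonempty ∧ IsCompact F ∧ F = ⋃ i ∈ D, phi N i '' F

def OmegaW (N : ℕ) (D : Finset (ℕ × ℕ)) (F : Set (ℝ × ℝ)) (x : ℝ × ℝ) (k : ℕ) :
    Set (List (ℕ × ℕ)) :=
  {l | l ∈ Words D k ∧ x ∈ phiW N l '' F}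

def Ek (N : ℕ) (D : Finset (ℕ × ℕ)) (F : Set (ℝ × ℝ)) (x : ℝ × ℝ) (k : ℕ) :
    Set (ℝ × ℝ) :=
  ⋃ l ∈ Words D k \ OmegaW N D F x k, phiW N l '' F

def IsRep (N : ℕ) (D : Finset (ℕ × ℕ)) (F : Set (ℝ × ℝ)) (x : ℝ × ℝ)
    (ii : ℕ → ℕ × ℕ) : Prop :=
  (∀ k, ii k ∈ D) ∧ ∀ k : ℕ, x ∈ phiW N (List.ofFn fun j : Fin k => ii (j : ℕ)) '' F

def SepComp (E A B : Set (ℝ × ℝ)) : Prop :=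
  A ⊆ E ∧ B ⊆ E ∧
    ∀ y ∈ A, ∀ z ∈ B, connectedComponentIn E y ≠ connectedComponentIn E z

def WellSep (N : ℕ) (D : Finset (ℕ × ℕ)) (F : Set (ℝ × ℝ)) (x : ℝ × ℝ) (n : ℕ)
    (ω τ : List (ℕ × ℕ)) : Prop :=
  ∀ p : ℕ, 1 ≤ p → SepComp (Ek N D F x (n + p)) (phiW N ω '' F) (phiW N τ '' F)

section Aux

variable {N : ℕ} {D : Finset (ℕ × ℕ)} {F : Set (ℝ × ℝ)}

lemma piece_sub (hFeq : F = ⋃ i ∈ D, phi N i '' F) :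
    ∀ l : List (ℕ × ℕ), (∀ a ∈ l, a ∈ D) → phiW N l '' F ⊆ F := by
  intro l
  induction l with
  | nil => intro _; simp [phiW_nil]
  | cons d t ih =>
    intro hmem
    have h1 : phiW N t '' F ⊆ F := ih fun a ha => hmem a (List.mem_cons_of_mem _ ha)
    have h2 : phi N d '' F ⊆ F := by
      conv_rhs => rw [hFeq]
      exact subset_iUnion₂ (s := fun i _ => phi N i '' F) d (hmem d (List.mem_cons_self))
    calc phiW N (d :: t) '' F = phi N d '' (phiW N t '' F) := by
          rw [phiW_cons, Set.image_comp]
      _ ⊆ phi N d '' F := Set.image_mono h1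
      _ ⊆ F := h2

lemma exists_split (hFeq : F = ⋃ i ∈ D, phi N i '' F) :
    ∀ (k : ℕ), ∀ z ∈ F, ∃ l ∈ Words D k, z ∈ phiW N l '' F := by
  intro k
  induction k with
  | zero =>
    intro z hz
    exact ⟨[], ⟨rfl, by simp⟩, by simpa [phiW_nil] using hz⟩
  | succ m ih =>
    intro z hz
    have hz' : z ∈ ⋃ i ∈ D, phi N i '' F := hFeq ▸ hz
    rcases Set.mem_iUnion₂.mp hz' with ⟨i, hiD, w, hwF, hwz⟩
    rcases ih w hwF with ⟨l, ⟨hlen, hmem⟩, q, hqF, hqw⟩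
    refine ⟨i :: l, ⟨by simp [hlen], ?_⟩, ?_⟩
    · intro a ha
      rcases List.mem_cons.mp ha with h | h
      · exact h ▸ hiD
      · exact hmem a h
    · exact ⟨q, hqF, by simp [phiW_cons, hqw, hwz]⟩

lemma piece_sub_Ek {x : ℝ × ℝ} {k : ℕ} {l : List (ℕ × ℕ)}
    (hl : l ∈ Words D k \ OmegaW N D F x k) : phiW N l '' F ⊆ Ek N D F x k :=
  Set.subset_biUnion_of_mem (u := fun l => phiW N l '' F) hl

lemma Ek_mono (hFeq : F = ⋃ i ∈ D, phi N i '' F) (x : ℝ × ℝ) (m p : ℕ) :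
    Ek N D F x m ⊆ Ek N D F x (m + p) := by
  intro y hy
  rcases Set.mem_iUnion₂.mp hy with ⟨ω, hω, q, hqF, hqy⟩
  rcases exists_split hFeq p q hqF with ⟨σ, ⟨hσlen, hσmem⟩, r, hrF, hrq⟩
  have hωW : ω ∈ Words D m := hω.1
  have happ : ω ++ σ ∈ Words D (m + p) := by
    constructor
    · simp [hωW.1, hσlen]
    · intro a ha
      rcases List.mem_append.mp ha with h | h
      · exact hωW.2 a h
      · exact hσmem a h
  have hsubωσ : phiW N (ω ++ σ) '' F ⊆ phiW N ω '' F := by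
    rw [phiW_append, Set.image_comp]
    exact Set.image_mono (piece_sub hFeq σ hσmem)
  have hnot : ω ++ σ ∉ OmegaW N D F x (m + p) := by
    intro hmem
    exact hω.2 ⟨hωW, hsubωσ hmem.2⟩
  apply Set.mem_biUnion (Set.mem_diff_of_mem happ hnot)
  exact ⟨r, hrF, by simp [phiW_append, hrq, hqy]⟩

lemma words_finite (D : Finset (ℕ × ℕ)) (k : ℕ) : (Words D k).Finite := by
  induction k with
  | zero => exact Set.Finite.subset (Set.finite_singleton []) (fun l hl => by
      simpa using List.length_eq_zero_iff.mp hl.1)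
  | succ m ih =>
    apply Set.Finite.subset (Set.Finite.image (fun p : (ℕ × ℕ) × List (ℕ × ℕ) => p.1 :: p.2)
      ((D.finite_toSet).prod ih))
    rintro l ⟨hlen, hmem⟩
    rcases l with _ | ⟨a, t⟩
    · simp at hlen
    exact ⟨(a, t), ⟨hmem a (List.mem_cons_self),
      by simpa using hlen, fun b hb => hmem b (List.mem_cons_of_mem _ hb)⟩, rfl⟩

lemma piece_preconnected (hFc : IsPreconnected F) (l : List (ℕ × ℕ)) :
    IsPreconnected (phiW N l '' F) :=
  hFc.image _ (continuous_phiW N l).continuousOn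

lemma bound_aux (hN : 2 ≤ N) (hne : F.Nonempty) (hcomp : IsCompact F)
    (hFeq : F = ⋃ i ∈ D, phi N i '' F)
    (f : ℝ × ℝ → ℝ) (hf : Continuous f) (c : ℕ × ℕ → ℝ)
    (hc : ∀ i ∈ D, 0 ≤ c i ∧ c i ≤ (N : ℝ) - 1)
    (hfc : ∀ i p, f (phi N i p) = (f p + c i) / (N : ℝ)) :
    ∀ z ∈ F, 0 ≤ f z ∧ f z ≤ 1 := by
  have hNR : (2 : ℝ) ≤ (N : ℝ) := by exact_mod_cast hN
  have upper : ∀ z ∈ F, f z ≤ 1 := by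
    obtain ⟨z, hzF, hz⟩ := hcomp.exists_isMaxOn hne hf.continuousOn
    have hz' : ∀ w ∈ F, f w ≤ f z := fun w hw => isMaxOn_iff.mp hz w hw
    have hzU : z ∈ ⋃ i ∈ D, phi N i '' F := hFeq ▸ hzF
    rcases Set.mem_iUnion₂.mp hzU with ⟨i, hiD, q, hqF, hqz⟩
    have h1 : f z = (f q + c i) / (N : ℝ) := by rw [← hqz, hfc]
    have h2 : f q ≤ f z := hz' q hqF
    have h3 : c i ≤ (N : ℝ) - 1 := (hc i hiD).2
    have h1' : f z * (N : ℝ) = f q + c i := by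
      rw [h1]; field_simp
    have hfz : f z ≤ 1 := by nlinarith [h1', h2, h3, hNR]
    exact fun w hw => le_trans (hz' w hw) hfz
  have lower : ∀ z ∈ F, 0 ≤ f z := by
    obtain ⟨z, hzF, hz⟩ := hcomp.exists_isMinOn hne hf.continuousOn
    have hz' : ∀ w ∈ F, f z ≤ f w := fun w hw => isMinOn_iff.mp hz w hw
    have hzU : z ∈ ⋃ i ∈ D, phi N i '' F := hFeq ▸ hzF
    rcases Set.mem_iUnion₂.mp hzU with ⟨i, hiD, q, hqF, hqz⟩
    have h1 : f z = (f q + c i) / (N : ℝ) := by rw [← hqz, hfc]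
    have h2 : f z ≤ f q := hz' q hqF
    have h3 : 0 ≤ c i := (hc i hiD).1
    have h1' : f z * (N : ℝ) = f q + c i := by
      rw [h1]; field_simp
    have hfz : 0 ≤ f z := by nlinarith [h1', h2, h3, hNR]
    exact fun w hw => le_trans hfz (hz' w hw)
  exact fun z hz => ⟨lower z hz, upper z hz⟩

lemma coord_bounds (hN : 2 ≤ N) (hd : ∀ i ∈ D, i.1 < N ∧ i.2 < N)
    (hF : IsAttractor N D F) :
    ∀ z ∈ F, 0 ≤ z.1 ∧ z.1 ≤ 1 ∧ 0 ≤ z.2 ∧ z.2 ≤ 1 := by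
  obtain ⟨hne, hcomp, hFeq⟩ := hF
  have b1 := bound_aux hN hne hcomp hFeq (fun p => p.1) (by fun_prop)
    (fun i => (i.1 : ℝ))
    (fun i hi => ⟨by positivity, by
      have := (hd i hi).1
      have : (i.1 : ℝ) + 1 ≤ (N : ℝ) := by exact_mod_cast this
      linarith⟩)
    (fun i p => rfl)
  have b2 := bound_aux hN hne hcomp hFeq (fun p => p.2) (by fun_prop)
    (fun i => (i.2 : ℝ))
    (fun i hi => ⟨by positivity, by
      have := (hd i hi).2
      have : (i.2 : ℝ) + 1 ≤ (N : ℝ) := by exact_mod_cast this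
      linarith⟩)
    (fun i p => rfl)
  exact fun z hz => ⟨(b1 z hz).1, (b1 z hz).2, (b2 z hz).1, (b2 z hz).2⟩

lemma diff_nonempty (hND : GoodDigits N D) (hF : IsAttractor N D F)
    (x : ℝ × ℝ) (k : ℕ) (hk : 3 ≤ k) :
    (Words D k \ OmegaW N D F x k).Nonempty := by
  obtain ⟨hN, hd, hcard, _⟩ := hND
  by_contra hne
  rw [Set.not_nonempty_iff_eq_empty, Set.diff_eq_empty] at hne
  have hN1 : 1 ≤ N := le_trans (by norm_num) hN
  have hNR : (0 : ℝ) < (N : ℝ) ^ k := by positivity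
  have bnd := coord_bounds hN hd hF
  set m1 := Nat.floor (x.1 * (N : ℝ) ^ k) with hm1
  set m2 := Nat.floor (x.2 * (N : ℝ) ^ k) with hm2
  have key : ∀ l ∈ Words D k,
      (valc N Prod.fst l ≤ m1 ∧ m1 ≤ valc N Prod.fst l + 1) ∧
      (valc N Prod.snd l ≤ m2 ∧ m2 ≤ valc N Prod.snd l + 1) := by
    intro l hl
    rcases (hne hl).2 with ⟨q, hqF, hql⟩
    obtain ⟨hq1, hq2, hq3, hq4⟩ := bnd q hqF
    have hEq := phiW_eq N (by omega) l q
    rw [hql] at hEq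
    have hlen : l.length = k := hl.1
    rw [hlen] at hEq
    have e1 : x.1 * (N : ℝ) ^ k = q.1 + (valc N Prod.fst l : ℝ) := by
      have := congrArg Prod.fst hEq
      field_simp at this
      linarith [this]
    have e2 : x.2 * (N : ℝ) ^ k = q.2 + (valc N Prod.snd l : ℝ) := by
      have := congrArg Prod.snd hEq
      field_simp at this
      linarith [this]
    constructor
    · constructor
      · exact Nat.le_floor (by rw [e1]; linarith)
      · calc m1 ≤ Nat.floor ((valc N Prod.fst l + 1 : ℕ) : ℝ) := by
              apply Nat.floor_le_floor
              push_cast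
              rw [e1]; linarith
          _ = valc N Prod.fst l + 1 := Nat.floor_natCast _
    · constructor
      · exact Nat.le_floor (by rw [e2]; linarith)
      · calc m2 ≤ Nat.floor ((valc N Prod.snd l + 1 : ℕ) : ℝ) := by
              apply Nat.floor_le_floor
              push_cast
              rw [e2]; linarith
          _ = valc N Prod.snd l + 1 := Nat.floor_natCast _
  classical
  set S4 : Finset (ℕ × ℕ) := ({m1 - 1, m1} : Finset ℕ) ×ˢ ({m2 - 1, m2} : Finset ℕ) with hS4
  have hLW : ∀ f : Fin k → {a // a ∈ D}, (List.ofFn fun j => (f j : ℕ × ℕ)) ∈ Words D k := by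
    intro f
    constructor
    · simp
    · intro a ha
      rcases List.mem_ofFn.mp ha with ⟨j, rfl⟩
      exact (f j).2
  have hmem4 : ∀ f : Fin k → {a // a ∈ D},
      ((valc N Prod.fst (List.ofFn fun j => (f j : ℕ × ℕ)),
        valc N Prod.snd (List.ofFn fun j => (f j : ℕ × ℕ))) : ℕ × ℕ) ∈ S4 := by
    intro f
    obtain ⟨⟨a1, a2⟩, ⟨b1, b2⟩⟩ := key _ (hLW f)
    rw [hS4, Finset.mem_product]
    constructor <;> · simp only [Finset.mem_insert, Finset.mem_singleton]; omega
  set g : (Fin k → {a // a ∈ D}) → {p // p ∈ S4} := fun f =>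
    ⟨(valc N Prod.fst (List.ofFn fun j => (f j : ℕ × ℕ)),
      valc N Prod.snd (List.ofFn fun j => (f j : ℕ × ℕ))), hmem4 f⟩ with hg
  have hginj : Function.Injective g := by
    intro f f' hff
    have h0 := congrArg Subtype.val hff
    have h1 := congrArg Prod.fst h0
    have h2 := congrArg Prod.snd h0
    simp only [hg] at h1 h2
    have hlen : (List.ofFn fun j => (f j : ℕ × ℕ)).length
        = (List.ofFn fun j => (f' j : ℕ × ℕ)).length := by simp
    have hbd : ∀ (f0 : Fin k → {a // a ∈ D}), ∀ a ∈ (List.ofFn fun j => (f0 j : ℕ × ℕ)),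
        a.1 < N ∧ a.2 < N := by
      intro f0 a ha
      rcases List.mem_ofFn.mp ha with ⟨j, rfl⟩
      exact hd _ (f0 j).2
    have := valc_comp_inj N hN1 _ _ hlen (hbd f) (hbd f') h1 h2
    have := List.ofFn_injective this
    funext j
    exact Subtype.ext (congrFun this j)
  have hcard1 : Fintype.card (Fin k → {a // a ∈ D}) ≤ Fintype.card {p // p ∈ S4} :=
    Fintype.card_le_of_injective g hginj
  have hc2 : Fintype.card {p // p ∈ S4} ≤ 4 := by
    rw [Fintype.card_coe, hS4]
    calc (({m1 - 1, m1} : Finset ℕ) ×ˢ ({m2 - 1, m2} : Finset ℕ)).card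
        = ({m1 - 1, m1} : Finset ℕ).card * ({m2 - 1, m2} : Finset ℕ).card :=
          Finset.card_product _ _
      _ ≤ 2 * 2 := Nat.mul_le_mul (Finset.card_insert_le _ _) (Finset.card_insert_le _ _)
      _ = 4 := rfl
  have hc3 : Fintype.card (Fin k → {a // a ∈ D}) = D.card ^ k := by
    rw [Fintype.card_fun, Fintype.card_coe, Fintype.card_fin]
  have h8 : 2 ^ k ≤ D.card ^ k := Nat.pow_le_pow_left hcard k
  have h9 : 2 ^ 3 ≤ 2 ^ k := Nat.pow_le_pow_right (by norm_num) hk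
  omega

end Aux

theorem stmt10 (N : ℕ) (D : Finset (ℕ × ℕ)) (hND : GoodDigits N D)
    (F : Set (ℝ × ℝ)) (hF : IsAttractor N D F) (hFconn : IsConnected F)
    (x : ℝ × ℝ) (hx : x ∈ F) (hcut : ¬ IsPreconnected (F \ {x}))
    (n : ℕ) (hn : 1 ≤ n) :
    (∀ ω ∈ Words D n \ OmegaW N D F x n, ∀ τ ∈ Words D n \ OmegaW N D F x n,
        ω ≠ τ → ¬ WellSep N D F x n ω τ) ↔
      ∃ p : ℕ, 1 ≤ p ∧ ∃ y ∈ Ek N D F x (n + p),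
        Ek N D F x n ⊆ connectedComponentIn (Ek N D F x (n + p)) y := by
  have hFeq : F = ⋃ i ∈ D, phi N i '' F := hF.2.2
  have hFne : F.Nonempty := hF.1
  obtain ⟨q0, hq0⟩ := hFne
  constructor
  · intro hlhs
    by_cases hSne : (Words D n \ OmegaW N D F x n).Nonempty
    · -- main case
      have key : ∀ ω τ : List (ℕ × ℕ), ∃ p : ℕ, 1 ≤ p ∧
          (ω ∈ Words D n \ OmegaW N D F x n → τ ∈ Words D n \ OmegaW N D F x n →
            ∃ c, c ∈ Ek N D F x (n + p) ∧
              phiW N ω '' F ∪ phiW N τ '' F ⊆ connectedComponentIn (Ek N D F x (n + p)) c) := by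
        intro ω τ
        by_cases hωS : ω ∈ Words D n \ OmegaW N D F x n
        swap
        · exact ⟨1, le_refl _, fun h _ => absurd h hωS⟩
        by_cases hτS : τ ∈ Words D n \ OmegaW N D F x n
        swap
        · exact ⟨1, le_refl _, fun _ h => absurd h hτS⟩
        by_cases hωτ : ω = τ
        · subst hωτ
          refine ⟨1, le_refl _, fun _ _ => ?_⟩
          have hsub : phiW N ω '' F ⊆ Ek N D F x (n + 1) :=
            (piece_sub_Ek hωS).trans (Ek_mono hFeq x n 1)
          refine ⟨phiW N ω q0, hsub ⟨q0, hq0, rfl⟩, ?_⟩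
          rw [Set.union_self]
          exact (piece_preconnected hFconn.2 ω).subset_connectedComponentIn
            ⟨q0, hq0, rfl⟩ hsub
        · have hws := hlhs ω hωS τ hτS hωτ
          unfold WellSep at hws
          push_neg at hws
          obtain ⟨p, hp, hnsep⟩ := hws
          have hA : phiW N ω '' F ⊆ Ek N D F x (n + p) :=
            (piece_sub_Ek hωS).trans (Ek_mono hFeq x n p)
          have hB : phiW N τ '' F ⊆ Ek N D F x (n + p) :=
            (piece_sub_Ek hτS).trans (Ek_mono hFeq x n p)
          have h3 : ¬ ∀ y ∈ phiW N ω '' F, ∀ z ∈ phiW N τ '' F,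
              connectedComponentIn (Ek N D F x (n + p)) y ≠
              connectedComponentIn (Ek N D F x (n + p)) z :=
            fun h => hnsep ⟨hA, hB, h⟩
          push_neg at h3
          obtain ⟨y, hyA, z, hzB, hyz⟩ := h3
          refine ⟨p, hp, fun _ _ => ⟨y, hA hyA, Set.union_subset ?_ ?_⟩⟩
          · exact (piece_preconnected hFconn.2 ω).subset_connectedComponentIn hyA hA
          · rw [hyz]
            exact (piece_preconnected hFconn.2 τ).subset_connectedComponentIn hzB hB
      choose P hP1 hP2 using key
      have Sfin : (Words D n \ OmegaW N D F x n).Finite :=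
        (words_finite D n).subset Set.diff_subset
      have hPfin : ((fun q : List (ℕ × ℕ) × List (ℕ × ℕ) => P q.1 q.2) ''
          ((Words D n \ OmegaW N D F x n) ×ˢ (Words D n \ OmegaW N D F x n))).Finite :=
        (Sfin.prod Sfin).image _
      obtain ⟨M, hM⟩ := hPfin.bddAbove
      have hMle : ∀ ω ∈ Words D n \ OmegaW N D F x n,
          ∀ τ ∈ Words D n \ OmegaW N D F x n, P ω τ ≤ M := by
        intro ω hω τ hτ
        exact hM ⟨(ω, τ), Set.mk_mem_prod hω hτ, rfl⟩
      obtain ⟨ω0, hω0⟩ := hSne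
      refine ⟨M + 1, by omega, phiW N ω0 q0,
        (piece_sub_Ek hω0).trans (Ek_mono hFeq x n (M + 1)) ⟨q0, hq0, rfl⟩, ?_⟩
      intro w hw
      rcases Set.mem_iUnion₂.mp hw with ⟨τ, hτ, hwτ⟩
      obtain ⟨c, hcE, hcomp⟩ := hP2 ω0 τ hω0 hτ
      have hEsub : Ek N D F x (n + P ω0 τ) ⊆ Ek N D F x (n + (M + 1)) := by
        have h := Ek_mono hFeq x (n + P ω0 τ) (M + 1 - P ω0 τ)
        have harith : n + P ω0 τ + (M + 1 - P ω0 τ) = n + (M + 1) := by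
          have := hMle ω0 hω0 τ hτ
          omega
        rwa [harith] at h
      have hcm : connectedComponentIn (Ek N D F x (n + P ω0 τ)) c ⊆
          connectedComponentIn (Ek N D F x (n + (M + 1))) c :=
        connectedComponentIn_mono c hEsub
      have hy0 : phiW N ω0 q0 ∈ connectedComponentIn (Ek N D F x (n + (M + 1))) c :=
        hcm (hcomp (Set.mem_union_left _ ⟨q0, hq0, rfl⟩))
      rw [← connectedComponentIn_eq hy0]
      exact hcm (hcomp (Set.mem_union_right _ hwτ))
    · -- Ek n is empty
      refine ⟨3, by norm_num, ?_⟩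
      obtain ⟨l, hl⟩ := diff_nonempty hND hF x (n + 3) (by omega)
      refine ⟨phiW N l q0, piece_sub_Ek hl ⟨q0, hq0, rfl⟩, ?_⟩
      intro w hw
      rcases Set.mem_iUnion₂.mp hw with ⟨τ, hτ, _⟩
      exact absurd ⟨τ, hτ⟩ hSne
  · rintro ⟨p, hp, y, hyE, hsub⟩ ω hω τ hτ hne hws
    obtain ⟨hA, hB, hcomp⟩ := hws p hp
    have ha : phiW N ω q0 ∈ Ek N D F x n := piece_sub_Ek hω ⟨q0, hq0, rfl⟩
    have hb : phiW N τ q0 ∈ Ek N D F x n := piece_sub_Ek hτ ⟨q0, hq0, rfl⟩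
    refine hcomp (phiW N ω q0) ⟨q0, hq0, rfl⟩ (phiW N τ q0) ⟨q0, hq0, rfl⟩ ?_
    rw [← connectedComponentIn_eq (hsub ha), ← connectedComponentIn_eq (hsub hb)]
end

section
/- For every integer N ≥ 2 and every integer k with 2N−1 ≤ k ≤ N²−1, there exists a digit set D ⊆ {0,…,N−1}² with |D| = k such that the generalized Sierpiński carpet F(N,D) is connected. -/
open Set Topology

namespace Aux

lemma phi_dist {N : ℕ} (hN : 0 < N) (d : ℕ × ℕ) (x y : ℝ × ℝ) :
    dist (phi N d x) (phi N d y) = dist x y / N := by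
  have hN' : (0:ℝ) < N := by exact_mod_cast hN
  simp only [phi, Prod.dist_eq, Real.dist_eq, div_sub_div_same,
    add_sub_add_right_eq_sub, abs_div, abs_of_pos hN']
  rw [max_div_div_right hN'.le]

variable {N : ℕ} {D : Finset (ℕ × ℕ)} {K : Set (ℝ × ℝ)}

lemma phi_mem (hK : IsAttractor N D K) {d} (hd : d ∈ D) {x} (hx : x ∈ K) :
    phi N d x ∈ K := by
  rw [hK.2.2]
  exact Set.mem_biUnion hd ⟨x, hx, rfl⟩

lemma fixed_mem (hN : 2 ≤ N) (hK : IsAttractor N D K) {d} (hd : d ∈ D) {c : ℝ × ℝ}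
    (hc : phi N d c = c) : c ∈ K := by
  obtain ⟨x0, hx0⟩ := hK.1
  set g : ℕ → ℝ × ℝ := fun n => (phi N d)^[n] x0 with hg
  have hgK : ∀ n, g n ∈ K := by
    intro n; induction n with
    | zero => simpa [g] using hx0
    | succ n ih =>
      have : g (n+1) = phi N d (g n) := Function.iterate_succ_apply' _ _ _
      rw [this]; exact phi_mem hK hd ih
  have hdist : ∀ n, dist (g n) c = dist x0 c / (N:ℝ)^n := by
    intro n; induction n with
    | zero => simp [g]
    | succ n ih =>
      have h1 : g (n+1) = phi N d (g n) := Function.iterate_succ_apply' _ _ _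
      rw [h1, ← hc, phi_dist (by omega) d, hc, ih, pow_succ, div_div]
  have hN1 : (1:ℝ) < N := by
    have : (2:ℝ) ≤ N := by exact_mod_cast hN
    linarith
  have htend : Filter.Tendsto g Filter.atTop (nhds c) := by
    rw [tendsto_iff_dist_tendsto_zero]
    simp only [hdist, div_eq_mul_inv, ← inv_pow]
    simpa using (tendsto_pow_atTop_nhds_zero_of_lt_one (by positivity)
      (inv_lt_one_of_one_lt₀ hN1)).const_mul (dist x0 c)
  exact hK.2.1.isClosed.mem_of_tendsto htend (Filter.Eventually.of_forall hgK)


lemma corner00 (hN : 2 ≤ N) (hK : IsAttractor N D K) (h00 : (0,0) ∈ D) :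
    ((0:ℝ), (0:ℝ)) ∈ K :=
  fixed_mem hN hK h00 (by simp [phi])

lemma corner10 (hN : 2 ≤ N) (hK : IsAttractor N D K) (hR : (N-1, 0) ∈ D) :
    ((1:ℝ), (0:ℝ)) ∈ K := by
  apply fixed_mem hN hK hR
  have hN0 : (N:ℝ) ≠ 0 := by positivity
  have h1 : ((N-1 : ℕ) : ℝ) = (N:ℝ) - 1 := by
    rw [Nat.cast_sub (by omega)]; simp
  simp only [phi, h1, Prod.mk.injEq]
  constructor <;> field_simp <;> simp

lemma corner01 (hN : 2 ≤ N) (hK : IsAttractor N D K) (hU : (0, N-1) ∈ D) :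
    ((0:ℝ), (1:ℝ)) ∈ K := by
  apply fixed_mem hN hK hU
  have hN0 : (N:ℝ) ≠ 0 := by positivity
  have h1 : ((N-1 : ℕ) : ℝ) = (N:ℝ) - 1 := by
    rw [Nat.cast_sub (by omega)]; simp
  simp only [phi, h1, Prod.mk.injEq]
  constructor <;> field_simp <;> simp

def Rel (K : Set (ℝ × ℝ)) (ε : ℝ) (x y : ℝ × ℝ) : Prop :=
  x ∈ K ∧ y ∈ K ∧ dist x y ≤ ε

def EC (K : Set (ℝ × ℝ)) (ε : ℝ) : ℝ × ℝ → ℝ × ℝ → Prop :=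
  Relation.ReflTransGen (Rel K ε)

lemma EC.symm {ε : ℝ} {x y : ℝ × ℝ} (h : EC K ε x y) : EC K ε y x :=
  haveI : Std.Symm (Rel K ε) := ⟨fun _ _ hab => ⟨hab.2.1, hab.1, by rw [dist_comm]; exact hab.2.2⟩⟩
  (Relation.ReflTransGen.stdSymm (r := Rel K ε)).symm _ _ h

lemma EC.trans' {ε : ℝ} {x y z : ℝ × ℝ} (h : EC K ε x y) (h' : EC K ε y z) :
    EC K ε x z := Relation.ReflTransGen.trans h h'

lemma EC.map (hK : IsAttractor N D K) (hN : 0 < N) {d} (hd : d ∈ D) {ε : ℝ}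
    {x y : ℝ × ℝ} (h : EC K ε x y) : EC K (ε / N) (phi N d x) (phi N d y) := by
  refine Relation.ReflTransGen.lift (phi N d) (fun a b hab => ?_) _ _ h
  refine ⟨phi_mem hK hd hab.1, phi_mem hK hd hab.2.1, ?_⟩
  rw [phi_dist hN]
  have hN' : (0:ℝ) < N := by exact_mod_cast hN
  exact (div_le_div_iff_of_pos_right hN').mpr hab.2.2


lemma chain_main (hN : 2 ≤ N) (hK : IsAttractor N D K)
    (h00 : ((0:ℕ),(0:ℕ)) ∈ D) (hR : (N-1, 0) ∈ D) (hU : (0, N-1) ∈ D)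
    (h3 : ∀ d ∈ D, d = (0,0) ∨ (1 ≤ d.2 ∧ (d.1, d.2 - 1) ∈ D) ∨
      (1 ≤ d.1 ∧ (d.1 - 1, d.2) ∈ D))
    {C : ℝ} (hC : ∀ x ∈ K, ∀ y ∈ K, dist x y ≤ C) :
    ∀ n : ℕ, ∀ x ∈ K, ∀ y ∈ K, EC K (C / (N:ℝ)^n) x y := by
  have hNpos : 0 < N := by omega
  have hN0 : (N:ℝ) ≠ 0 := by positivity
  intro n
  induction n with
  | zero =>
    intro x hx y hy
    exact Relation.ReflTransGen.single ⟨hx, hy, by simpa using hC x hx y hy⟩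
  | succ n ih =>
    have inner : ∀ d ∈ D, ∀ u ∈ phi N d '' K, ∀ v ∈ phi N d '' K,
        EC K (C / (N:ℝ)^(n+1)) u v := by
      rintro d hd u ⟨u', hu', rfl⟩ v ⟨v', hv', rfl⟩
      have := EC.map hK hNpos hd (ih u' hu' v' hv')
      rwa [div_div, ← pow_succ] at this
    have hc00 := corner00 hN hK h00
    have hc10 := corner10 hN hK hR
    have hc01 := corner01 hN hK hU
    have toCorner : ∀ m : ℕ, ∀ d ∈ D, d.1 + d.2 ≤ m → ∀ u ∈ phi N d '' K,
        EC K (C / (N:ℝ)^(n+1)) u ((0:ℝ), (0:ℝ)) := by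
      intro m
      induction m with
      | zero =>
        intro d hd hsum u hu
        have hd0 : d = (0,0) := by
          have := Nat.le_zero.mp hsum
          exact Prod.ext (by omega) (by omega)
        subst hd0
        have : ((0:ℝ),(0:ℝ)) ∈ phi N (0,0) '' K :=
          ⟨((0:ℝ),(0:ℝ)), hc00, by simp [phi]⟩
        exact inner _ hd u hu _ this
      | succ m IH =>
        intro d hd hsum u hu
        rcases h3 d hd with h | ⟨hj, hnb⟩ | ⟨hi, hnb⟩
        · subst h
          have : ((0:ℝ),(0:ℝ)) ∈ phi N (0,0) '' K :=
            ⟨((0:ℝ),(0:ℝ)), hc00, by simp [phi]⟩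
          exact inner _ hd u hu _ this
        · -- vertical: down neighbor
          set z : ℝ × ℝ := phi N d ((0:ℝ), (0:ℝ)) with hz
          have hz1 : z ∈ phi N d '' K := ⟨_, hc00, rfl⟩
          have hz2 : z = phi N (d.1, d.2 - 1) ((0:ℝ), (1:ℝ)) := by
            have hcast : ((d.2 - 1 : ℕ) : ℝ) = (d.2 : ℝ) - 1 := by
              rw [Nat.cast_sub hj]; simp
            simp only [phi, hz, hcast, Prod.mk.injEq]
            constructor <;> simp
          have hz3 : z ∈ phi N (d.1, d.2 - 1) '' K := ⟨_, hc01, hz2.symm⟩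
          refine (inner d hd u hu z hz1).trans' ?_
          exact IH (d.1, d.2 - 1) hnb (by simp; omega) z hz3
        · -- horizontal: left neighbor
          set z : ℝ × ℝ := phi N d ((0:ℝ), (0:ℝ)) with hz
          have hz1 : z ∈ phi N d '' K := ⟨_, hc00, rfl⟩
          have hz2 : z = phi N (d.1 - 1, d.2) ((1:ℝ), (0:ℝ)) := by
            have hcast : ((d.1 - 1 : ℕ) : ℝ) = (d.1 : ℝ) - 1 := by
              rw [Nat.cast_sub hi]; simp
            simp only [phi, hz, hcast, Prod.mk.injEq]
            constructor <;> simp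
          have hz3 : z ∈ phi N (d.1 - 1, d.2) '' K := ⟨_, hc10, hz2.symm⟩
          refine (inner d hd u hu z hz1).trans' ?_
          exact IH (d.1 - 1, d.2) hnb (by simp; omega) z hz3
    intro x hx y hy
    have hx' : x ∈ ⋃ i ∈ D, phi N i '' K := hK.2.2 ▸ hx
    have hy' : y ∈ ⋃ i ∈ D, phi N i '' K := hK.2.2 ▸ hy
    simp only [Set.mem_iUnion] at hx' hy'
    obtain ⟨dx, hdx, hxd⟩ := hx'
    obtain ⟨dy, hdy, hyd⟩ := hy'
    exact (toCorner _ dx hdx le_rfl x hxd).trans'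
      (EC.symm (toCorner _ dy hdy le_rfl y hyd))

theorem connected_of (hN : 2 ≤ N) (hK : IsAttractor N D K)
    (h00 : ((0:ℕ),(0:ℕ)) ∈ D) (hR : (N-1, 0) ∈ D) (hU : (0, N-1) ∈ D)
    (h3 : ∀ d ∈ D, d = (0,0) ∨ (1 ≤ d.2 ∧ (d.1, d.2 - 1) ∈ D) ∨
      (1 ≤ d.1 ∧ (d.1 - 1, d.2) ∈ D)) : IsConnected K := by
  refine ⟨hK.1, ?_⟩
  rw [isPreconnected_closed_iff]
  intro s t hs ht hcov hne1 hne2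
  by_contra hemp
  rw [Set.not_nonempty_iff_eq_empty] at hemp
  set A := K ∩ s with hA
  set B := K ∩ t with hB
  have hAcomp : IsCompact A := hK.2.1.inter_right hs
  have hBcomp : IsCompact B := hK.2.1.inter_right ht
  have hdisj : A ∩ B = ∅ := by
    rw [Set.eq_empty_iff_forall_notMem]
    rintro x ⟨⟨hxK, hxs⟩, ⟨-, hxt⟩⟩
    have hx : x ∈ K ∩ (s ∩ t) := ⟨hxK, hxs, hxt⟩
    rw [hemp] at hx; exact hx
  obtain ⟨a0, ha0, hmin⟩ := hAcomp.exists_isMinOn hne1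
    (Metric.continuous_infDist_pt B).continuousOn
  have ha0B : a0 ∉ B := fun h => by
    have : a0 ∈ A ∩ B := ⟨ha0, h⟩
    rw [hdisj] at this; exact this
  have hδ : 0 < Metric.infDist a0 B :=
    (hBcomp.isClosed.notMem_iff_infDist_pos hne2).mp ha0B
  set δ := Metric.infDist a0 B with hδ'
  have hlow : ∀ a ∈ A, ∀ b ∈ B, δ ≤ dist a b := fun a ha b hb =>
    le_trans (hmin ha) (Metric.infDist_le_dist_of_mem hb)
  obtain ⟨C, hC0⟩ := Metric.isBounded_iff.mp hK.2.1.isBounded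
  have hC : ∀ x ∈ K, ∀ y ∈ K, dist x y ≤ C := fun x hx y hy => hC0 hx hy
  have hN1 : (1:ℝ) < N := by
    have : (2:ℝ) ≤ N := by exact_mod_cast hN
    linarith
  have htend : Filter.Tendsto (fun n : ℕ => C / (N:ℝ)^n) Filter.atTop (nhds 0) := by
    simp only [div_eq_mul_inv, ← inv_pow]
    simpa using (tendsto_pow_atTop_nhds_zero_of_lt_one (by positivity)
      (inv_lt_one_of_one_lt₀ hN1)).const_mul C
  obtain ⟨n, hn⟩ := (htend.eventually (eventually_lt_nhds hδ)).exists
  obtain ⟨b0, hb0⟩ := hne2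
  have hchain := chain_main hN hK h00 hR hU h3 hC n a0 ha0.1 b0 hb0.1
  have stay : ∀ q, EC K (C / (N:ℝ)^n) a0 q → q ∈ A := by
    intro q h
    induction h with
    | refl => exact ha0
    | tail hab hbc ih =>
      obtain ⟨hbK, hcK, hd⟩ := hbc
      rcases hcov hcK with h | h
      · exact ⟨hcK, h⟩
      · exfalso
        have := hlow _ ih _ ⟨hcK, h⟩
        linarith [hd.trans_lt hn]
  have hb0A : b0 ∈ A := stay b0 hchain
  have : b0 ∈ A ∩ B := ⟨hb0A, hb0⟩
  rw [hdisj] at this; exact this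


def ff (N : ℕ) (t : ℕ) : ℕ × ℕ :=
  if t < N then (t, 0)
  else if t < 2 * N - 1 then (0, t - N + 1)
  else ((t - (2 * N - 1)) % (N - 1) + 1, (t - (2 * N - 1)) / (N - 1) + 1)

lemma ff_inj (hN : 2 ≤ N) : Function.Injective (ff N) := by
  intro t1 t2 hf
  unfold ff at hf
  split_ifs at hf with h1 h2 h3 h4 h5
  all_goals simp only [Prod.mk.injEq] at hf
  all_goals try omega
  all_goals try exact absurd hf.2 (Nat.succ_ne_zero _)
  all_goals try exact absurd hf.2.symm (Nat.succ_ne_zero _)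
  -- remaining: both in block 3
  all_goals (
    try (
      have hmod : (t1 - (2*N-1)) % (N-1) = (t2 - (2*N-1)) % (N-1) := by omega
      have hdiv : (t1 - (2*N-1)) / (N-1) = (t2 - (2*N-1)) / (N-1) := by omega
      have hs : t1 - (2*N-1) = t2 - (2*N-1) := by
        calc t1 - (2*N-1) = (t1 - (2*N-1)) % (N-1) + (N-1) * ((t1 - (2*N-1)) / (N-1)) :=
              (Nat.mod_add_div _ _).symm
          _ = (t2 - (2*N-1)) % (N-1) + (N-1) * ((t2 - (2*N-1)) / (N-1)) := by
              rw [hmod, hdiv]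
          _ = t2 - (2*N-1) := Nat.mod_add_div _ _
      omega))

lemma ff_bound (hN : 2 ≤ N) {t : ℕ} (ht : t + 2 ≤ N * N) :
    (ff N t).1 < N ∧ (ff N t).2 < N := by
  unfold ff
  split_ifs with h1 h2
  · simp; omega
  · simp; omega
  · simp only
    constructor
    · have := Nat.mod_lt (t - (2*N-1)) (show 0 < N - 1 by omega)
      omega
    · have key : t - (2*N-1) < (N-1) * (N-1) := by
        obtain ⟨A, B, hA, hB, hAB⟩ : ∃ A B, (N-1)*(N-1) = A ∧ N*N = B ∧ A + 2*N = B + 1 := by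
          refine ⟨_, _, rfl, rfl, ?_⟩
          obtain ⟨M, rfl⟩ : ∃ M, N = M + 2 := ⟨N-2, by omega⟩
          have e1 : M + 2 - 1 = M + 1 := by omega
          rw [e1]; ring
        rw [hA]; rw [hB] at ht
        omega
      have := Nat.div_lt_iff_lt_mul (show 0 < N - 1 by omega) |>.mpr key
      omega


lemma ff_eq1 {t : ℕ} (h : t < N) : ff N t = (t, 0) := by
  unfold ff; rw [if_pos h]

lemma ff_eq2 {t : ℕ} (h1 : ¬ t < N) (h2 : t < 2*N - 1) : ff N t = (0, t - N + 1) := by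
  unfold ff; rw [if_neg h1, if_pos h2]

lemma ff_eq3 (hN : 2 ≤ N) {t : ℕ} (h2 : ¬ t < 2*N - 1) :
    ff N t = ((t - (2*N-1)) % (N-1) + 1, (t - (2*N-1)) / (N-1) + 1) := by
  unfold ff; rw [if_neg (by omega), if_neg h2]

lemma ff_key (hN : 2 ≤ N) {t : ℕ} (ht : t + 2 ≤ N * N) :
    t - (2*N-1) < (N-1) * (N-1) := by
  obtain ⟨M, rfl⟩ : ∃ M, N = M + 2 := ⟨N-2, by omega⟩
  have e1 : (M+2-1) * (M+2-1) = M*M + 2*M + 1 := by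
    have e : M + 2 - 1 = M + 1 := by omega
    rw [e]; ring
  have e2 : (M+2) * (M+2) = M*M + 4*M + 4 := by ring
  rw [e2] at ht
  rw [e1]
  generalize M * M = Q at ht ⊢
  omega

lemma ff_h3 (hN : 2 ≤ N) {k t : ℕ} (hk2 : k + 1 ≤ N * N) (ht : t < k) :
    ff N t = (0,0) ∨
    (1 ≤ (ff N t).2 ∧ ((ff N t).1, (ff N t).2 - 1) ∈ (Finset.range k).image (ff N)) ∨
    (1 ≤ (ff N t).1 ∧ ((ff N t).1 - 1, (ff N t).2) ∈ (Finset.range k).image (ff N)) := by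
  have hmem : ∀ t' : ℕ, t' < k → ff N t' ∈ (Finset.range k).image (ff N) :=
    fun t' ht' => Finset.mem_image.2 ⟨t', Finset.mem_range.2 ht', rfl⟩
  by_cases h1 : t < N
  · by_cases h0 : t = 0
    · left; subst h0; rw [ff_eq1 h1]
    · right; right
      rw [ff_eq1 h1]
      refine ⟨by omega, ?_⟩
      have e2 : ff N (t - 1) = (t - 1, 0) := ff_eq1 (by omega)
      simpa [e2] using hmem (t-1) (by omega)
  · by_cases h2 : t < 2*N - 1
    · right; left
      rw [ff_eq2 h1 h2]
      refine ⟨by omega, ?_⟩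
      by_cases hEq : t = N
      · have e2 : ff N 0 = (0, 0) := ff_eq1 (by omega)
        have : ((0:ℕ), t - N + 1 - 1) = ff N 0 := by rw [e2]; subst hEq; simp
        rw [this]; exact hmem 0 (by omega)
      · have e2 : ff N (t - 1) = (0, t - 1 - N + 1) := ff_eq2 (by omega) (by omega)
        have : ((0:ℕ), t - N + 1 - 1) = ff N (t-1) := by
          rw [e2]; exact Prod.ext rfl (by omega)
        rw [this]; exact hmem (t-1) (by omega)
    · -- block 3
      right; right
      have ht2 : t + 2 ≤ N * N := by
        generalize N * N = Q at hk2 ⊢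
        omega
      have hkey := ff_key hN ht2
      obtain ⟨r, hr'⟩ : ∃ r, (t - (2*N-1)) % (N-1) = r := ⟨_, rfl⟩
      obtain ⟨q, hq'⟩ : ∃ q, (t - (2*N-1)) / (N-1) = q := ⟨_, rfl⟩
      have hqlt : q < N - 1 := by
        rw [← hq']
        exact (Nat.div_lt_iff_lt_mul (show 0 < N - 1 by omega)).mpr hkey
      have hrlt : r < N - 1 := by
        rw [← hr']; exact Nat.mod_lt _ (by omega)
      obtain ⟨P, hPdef⟩ : ∃ P, (N-1) * q = P := ⟨_, rfl⟩
      have hP : r + P = t - (2*N-1) := by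
        rw [← hr', ← hPdef, ← hq']; exact Nat.mod_add_div _ _
      have hqP : q ≤ P := by
        rw [← hPdef]; exact Nat.le_mul_of_pos_left _ (by omega)
      rw [ff_eq3 hN h2, hr', hq']
      refine ⟨by omega, ?_⟩
      by_cases hr : r = 0
      · -- left neighbor is in the left column: ff (N + q)
        have e2 : ff N (N + q) = (0, q + 1) := by
          rw [ff_eq2 (by omega) (by omega)]
          exact Prod.ext rfl (by omega)
        have hlt : N + q < k := by omega
        have heq : ((r + 1 - 1 : ℕ), q + 1) = ff N (N + q) := by
          rw [e2]; exact Prod.ext (by omega) rfl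
        rw [heq]; exact hmem _ hlt
      · -- left neighbor is ff (t-1)
        have hsd : t - (2*N-1) - 1 = (r - 1) + (N-1) * q := by
          rw [hPdef]; omega
        have hm : (t - (2*N-1) - 1) % (N-1) = r - 1 := by
          rw [hsd, Nat.add_mul_mod_self_left, Nat.mod_eq_of_lt (by omega)]
        have hd : (t - (2*N-1) - 1) / (N-1) = q := by
          rw [hsd, Nat.add_mul_div_left _ _ (show 0 < N - 1 by omega),
            Nat.div_eq_of_lt (by omega), zero_add]
        have e2 : ff N (t - 1) = (r - 1 + 1, q + 1) := by
          rw [ff_eq3 hN (by omega)]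
          have e3 : t - 1 - (2*N-1) = t - (2*N-1) - 1 := by omega
          rw [e3, hm, hd]
        have heq : ((r + 1 - 1 : ℕ), q + 1) = ff N (t - 1) := by
          rw [e2]; exact Prod.ext (by omega) rfl
        rw [heq]; exact hmem _ (by omega)

end Aux

theorem stmt15 (N : ℕ) (hN : 2 ≤ N) (k : ℕ) (hk1 : 2 * N - 1 ≤ k)
    (hk2 : k ≤ N ^ 2 - 1) :
    ∃ D : Finset (ℕ × ℕ), D.card = k ∧ (∀ i ∈ D, i.1 < N ∧ i.2 < N) ∧
      ∀ F : Set (ℝ × ℝ), IsAttractor N D F → IsConnected F := by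
  have hNN : 4 ≤ N * N := Nat.mul_le_mul hN hN
  have hk2' : k + 1 ≤ N * N := by
    have e : N ^ 2 = N * N := pow_two N
    rw [e] at hk2
    generalize N * N = Q at hNN hk2 ⊢
    omega
  refine ⟨(Finset.range k).image (Aux.ff N), ?_, ?_, ?_⟩
  · rw [Finset.card_image_of_injective _ (Aux.ff_inj hN), Finset.card_range]
  · intro i hi
    simp only [Finset.mem_image, Finset.mem_range] at hi
    obtain ⟨t, ht, rfl⟩ := hi
    exact Aux.ff_bound hN (by generalize N * N = Q at hk2' ⊢; omega)
  · intro F hF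
    have h00 : ((0:ℕ),(0:ℕ)) ∈ (Finset.range k).image (Aux.ff N) :=
      Finset.mem_image.2 ⟨0, Finset.mem_range.2 (by omega),
        by rw [Aux.ff_eq1 (by omega)]⟩
    have hR : ((N-1 : ℕ), (0:ℕ)) ∈ (Finset.range k).image (Aux.ff N) :=
      Finset.mem_image.2 ⟨N-1, Finset.mem_range.2 (by omega),
        by rw [Aux.ff_eq1 (by omega)]⟩
    have hU : ((0:ℕ), (N-1:ℕ)) ∈ (Finset.range k).image (Aux.ff N) :=
      Finset.mem_image.2 ⟨2*N-2, Finset.mem_range.2 (by omega),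
        by rw [Aux.ff_eq2 (by omega) (by omega)]; exact Prod.ext rfl (by omega)⟩
    have h3 : ∀ d ∈ (Finset.range k).image (Aux.ff N), d = (0,0) ∨
        (1 ≤ d.2 ∧ (d.1, d.2 - 1) ∈ (Finset.range k).image (Aux.ff N)) ∨
        (1 ≤ d.1 ∧ (d.1 - 1, d.2) ∈ (Finset.range k).image (Aux.ff N)) := by
      intro d hd
      obtain ⟨t, ht, rfl⟩ := Finset.mem_image.1 hd
      exact Aux.ff_h3 hN hk2' (Finset.mem_range.1 ht)
    exact Aux.connected_of hN hF h00 hR hU h3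
end

section
/- Let 𝐰, 𝐰' ∈ D* be words of equal length in the digit set of a Barański sponge. Then ψ_𝐰(Q₀) ∩ ψ_{𝐰'}(Q₀) ≠ ∅ if and only if π(𝐰) − π(𝐰') is a vector all of whose coordinates lie in {−1, 0, 1}; moreover, in that case the dimension of the intersection (as a box, i.e., product of intervals) equals d − Σᵢ |πᵢ(𝐰) − πᵢ(𝐰')|. -/
open Set

noncomputable def psiB {d : ℕ} (p : Fin d → ℕ → ℝ) (w : Fin d → ℕ)
    (x : Fin d → ℝ) : Fin d → ℝ :=
  fun i => p i (w i) * x i + ∑ l ∈ Finset.Ico 1 (w i), p i l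

noncomputable def psiBW {d : ℕ} (p : Fin d → ℕ → ℝ) (l : List (Fin d → ℕ)) :
    (Fin d → ℝ) → (Fin d → ℝ) :=
  l.foldr (fun w g => psiB p w ∘ g) id

def piB {d : ℕ} (Nv : Fin d → ℕ) (l : List (Fin d → ℕ)) (i : Fin d) : ℤ :=
  l.foldl (fun acc w => (Nv i : ℤ) * acc + (w i : ℤ)) 0

def BWords {d : ℕ} (D : Finset (Fin d → ℕ)) (k : ℕ) : Set (List (Fin d → ℕ)) :=
  {l | l.length = k ∧ ∀ w ∈ l, w ∈ D}

def BSetup (d : ℕ) (Nv : Fin d → ℕ) (p : Fin d → ℕ → ℝ)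
    (D : Finset (Fin d → ℕ)) : Prop :=
  2 ≤ d ∧ (∀ i, 2 ≤ Nv i) ∧ (∀ i j, 1 ≤ j → j ≤ Nv i → 0 < p i j) ∧
    (∀ i, ∑ j ∈ Finset.Icc 1 (Nv i), p i j = 1) ∧
    (∀ w ∈ D, ∀ i, 1 ≤ w i ∧ w i ≤ Nv i) ∧ 1 < D.card ∧ D.card < ∏ i, Nv i

def IsBAttractor {d : ℕ} (p : Fin d → ℕ → ℝ) (D : Finset (Fin d → ℕ))
    (K : Set (Fin d → ℝ)) : Prop :=
  K.Nonempty ∧ IsCompact K ∧ K = ⋃ w ∈ D, psiB p w '' K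

def Q0B (d : ℕ) : Set (Fin d → ℝ) := Set.univ.pi fun _ => Set.Icc (0 : ℝ) 1

namespace B16


variable (p : ℕ → ℝ) (N : ℕ)

noncomputable def qB (j : ℕ) : ℝ := ∑ l ∈ Finset.Ico 1 j, p l

def pi1 (N : ℕ) (s : List ℕ) : ℤ := s.foldl (fun (acc : ℤ) (j : ℕ) => (N : ℤ) * acc + (j : ℤ)) 0

def cgeo (N m : ℕ) : ℤ := ∑ j ∈ Finset.range m, (N : ℤ) ^ j

def Ok (N : ℕ) (s : List ℕ) : Prop := ∀ j ∈ s, 1 ≤ j ∧ j ≤ N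

noncomputable def L1 : List ℕ → ℝ
  | [] => 0
  | a :: t => p a * L1 t + qB p a

noncomputable def len1 (s : List ℕ) : ℝ := (s.map p).prod

section
variable {p N} (hN : 2 ≤ N) (hp : ∀ j, 1 ≤ j → j ≤ N → 0 < p j)
  (hsum : ∑ j ∈ Finset.Icc 1 N, p j = 1)

lemma qB_one : qB p 1 = 0 := by simp [qB]

lemma qB_succ {j : ℕ} (hj : 1 ≤ j) : qB p (j + 1) = qB p j + p j := by
  simp [qB, Finset.sum_Ico_succ_top hj]

include hp in
lemma qB_mono {j j' : ℕ} (hj : 1 ≤ j) (hjj : j ≤ j') (hj' : j' ≤ N + 1) :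
    qB p j ≤ qB p j' := by
  apply Finset.sum_le_sum_of_subset_of_nonneg
  · exact Finset.Ico_subset_Ico le_rfl hjj
  · intro l hl h2
    simp only [Finset.mem_Ico] at hl
    exact (hp l hl.1 (by omega)).le

include hp in
lemma qB_nonneg {j : ℕ} (hj : j ≤ N + 1) : 0 ≤ qB p j := by
  rcases Nat.eq_zero_or_pos j with h | h
  · simp [qB, h]
  · rw [← qB_one (p := p)]; exact qB_mono hp le_rfl h hj

include hsum in
lemma qB_top : qB p (N + 1) = 1 := by
  rw [qB, ← hsum]
  congr 1

lemma len1_cons (a : ℕ) (t : List ℕ) : len1 p (a :: t) = p a * len1 p t := by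
  simp [len1]

lemma len1_nil : len1 p [] = 1 := by simp [len1]

include hp in
lemma len1_pos {s : List ℕ} (hs : Ok N s) : 0 < len1 p s := by
  induction s with
  | nil => simp [len1]
  | cons a t ih =>
    rw [len1_cons]
    have := hs a (by simp)
    exact mul_pos (hp a this.1 this.2) (ih fun j hj => hs j (by simp [hj]))

include hp in
lemma L1_nonneg {s : List ℕ} (hs : Ok N s) : 0 ≤ L1 p s := by
  induction s with
  | nil => simp [L1]
  | cons a t ih =>
    have ha := hs a (by simp)
    have h1 : 0 ≤ p a * L1 p t :=
      mul_nonneg (hp a ha.1 ha.2).le (ih fun j hj => hs j (by simp [hj]))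
    have h2 : 0 ≤ qB p a := qB_nonneg hp (by omega)
    simpa [L1] using add_nonneg h1 h2

include hp hsum in
lemma R1_le_one {s : List ℕ} (hs : Ok N s) : L1 p s + len1 p s ≤ 1 := by
  induction s with
  | nil => simp [L1, len1]
  | cons a t ih =>
    have ha := hs a (by simp)
    have ht : Ok N t := fun j hj => hs j (by simp [hj])
    have h1 : L1 p t + len1 p t ≤ 1 := ih ht
    have hpa := hp a ha.1 ha.2
    have : L1 p (a :: t) + len1 p (a :: t)
        = p a * (L1 p t + len1 p t) + qB p a := by ring_nf; simp [L1, len1_cons]; ring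
    rw [this]
    calc p a * (L1 p t + len1 p t) + qB p a ≤ p a * 1 + qB p a := by
          nlinarith
      _ = qB p (a + 1) := by rw [qB_succ ha.1]; ring
      _ ≤ qB p (N + 1) := qB_mono hp (by omega) (by omega) le_rfl
      _ = 1 := qB_top hsum

include hp in
lemma L1_pos {s : List ℕ} (hs : Ok N s) (hne : s ≠ List.replicate s.length 1) :
    0 < L1 p s := by
  induction s with
  | nil => simp at hne
  | cons a t ih =>
    have ha := hs a (by simp)
    have ht : Ok N t := fun j hj => hs j (by simp [hj])
    have hLt : 0 ≤ L1 p t := L1_nonneg hp ht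
    rcases Nat.lt_or_ge 1 a with h1 | h1
    · have : qB p 2 ≤ qB p a := qB_mono hp (by omega) h1 (by omega)
      have h2 : qB p 2 = p 1 := by rw [show (2:ℕ) = 1 + 1 from rfl, qB_succ le_rfl, qB_one]; ring
      have hp1 : 0 < p 1 := hp 1 le_rfl (by omega)
      have : 0 < qB p a := by rw [← h2] at *; linarith
      have hpa := hp a ha.1 ha.2
      simp only [L1]
      nlinarith
    · have ha1 : a = 1 := le_antisymm h1 ha.1
      subst ha1
      have htne : t ≠ List.replicate t.length 1 := by
        intro h; apply hne; simp [List.replicate_succ, ← h]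
      have := ih ht htne
      have hp1 : 0 < p 1 := hp 1 le_rfl (by omega)
      simp only [L1, qB_one]
      nlinarith

include hp hsum in
lemma R1_lt_one {s : List ℕ} (hs : Ok N s) (hne : s ≠ List.replicate s.length N) :
    L1 p s + len1 p s < 1 := by
  induction s with
  | nil => simp at hne
  | cons a t ih =>
    have ha := hs a (by simp)
    have ht : Ok N t := fun j hj => hs j (by simp [hj])
    have hpa := hp a ha.1 ha.2
    have hR : L1 p t + len1 p t ≤ 1 := R1_le_one hp hsum ht
    have key : L1 p (a :: t) + len1 p (a :: t)
        = p a * (L1 p t + len1 p t) + qB p a := by simp [L1, len1_cons]; ring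
    rcases Nat.lt_or_ge a N with hlt | hge
    · have : p a * (L1 p t + len1 p t) + qB p a ≤ qB p (a+1) := by
        rw [qB_succ ha.1]; nlinarith
      have h2 : qB p (a+1) ≤ qB p N := qB_mono hp (by omega) (by omega) (by omega)
      have h3 : qB p N < qB p (N+1) := by
        rw [qB_succ (by omega)]
        have := hp N (by omega) le_rfl
        linarith
      rw [key]
      calc p a * (L1 p t + len1 p t) + qB p a ≤ qB p (a+1) := this
        _ ≤ qB p N := h2
        _ < 1 := by rw [← qB_top hsum (p := p)]; exact h3
    · have haN : a = N := le_antisymm ha.2 hge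
      have htne : t ≠ List.replicate t.length N := by
        intro h; apply hne; rw [haN]; simp [List.replicate_succ, ← h]
      have hRt : L1 p t + len1 p t < 1 := ih ht htne
      have htop : qB p N + p N = 1 := by
        have h1 : qB p (N + 1) = 1 := qB_top hsum
        rwa [qB_succ (by omega)] at h1
      rw [key, haN]
      have hpN : 0 < p N := hp N (by omega) le_rfl
      nlinarith

end

lemma foldl_init (N : ℕ) (s : List ℕ) (a : ℤ) :
    s.foldl (fun (acc : ℤ) (j : ℕ) => (N : ℤ) * acc + (j : ℤ)) a
      = a * (N : ℤ) ^ s.length + pi1 N s := by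
  induction s generalizing a with
  | nil => simp [pi1]
  | cons b t ih =>
    simp only [List.foldl_cons, List.length_cons, pi1]
    rw [ih ((N:ℤ) * a + b), ih ((N:ℤ) * 0 + b)]
    ring

lemma pi1_cons (N : ℕ) (a : ℕ) (t : List ℕ) :
    pi1 N (a :: t) = (a : ℤ) * (N : ℤ) ^ t.length + pi1 N t := by
  have h := foldl_init N t ((N:ℤ) * 0 + a)
  simp only [pi1, List.foldl_cons]
  rw [h]; unfold pi1; ring

lemma cgeo_succ (N m : ℕ) : cgeo N (m + 1) = (N : ℤ) ^ m + cgeo N m := by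
  simp [cgeo, Finset.sum_range_succ]; ring

lemma cgeo_mul (N m : ℕ) : (N : ℤ) * cgeo N m = cgeo N m + (N : ℤ) ^ m - 1 := by
  induction m with
  | zero => simp [cgeo]
  | succ n ih => rw [cgeo_succ]; ring_nf; ring_nf at ih; linarith

lemma pi1_bounds {N : ℕ} (hN : 1 ≤ N) {s : List ℕ} (hs : Ok N s) :
    cgeo N s.length ≤ pi1 N s ∧ pi1 N s ≤ (N : ℤ) * cgeo N s.length := by
  induction s with
  | nil => simp [pi1, cgeo]
  | cons a t ih =>
    have ha := hs a (by simp)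
    have ht : Ok N t := fun j hj => hs j (by simp [hj])
    obtain ⟨h1, h2⟩ := ih ht
    have hNp : (0:ℤ) < (N:ℤ) := by exact_mod_cast hN
    have hp : (0:ℤ) < (N:ℤ) ^ t.length := by positivity
    have ha1 : (1:ℤ) ≤ (a:ℤ) := by exact_mod_cast ha.1
    have ha2 : (a:ℤ) ≤ (N:ℤ) := by exact_mod_cast ha.2
    rw [pi1_cons, List.length_cons]
    have e1 := cgeo_mul N t.length
    have e2 := cgeo_mul N (t.length + 1)
    have e3 := cgeo_succ N t.length
    have e4 : (N:ℤ) ^ (t.length + 1) = (N:ℤ) * (N:ℤ) ^ t.length := by ring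
    constructor
    · nlinarith
    · nlinarith

lemma pi1_inj {N : ℕ} (hN : 1 ≤ N) {s s' : List ℕ} (hlen : s.length = s'.length)
    (hs : Ok N s) (hs' : Ok N s') (h : pi1 N s = pi1 N s') : s = s' := by
  induction s generalizing s' with
  | nil => cases s' with
    | nil => rfl
    | cons a t => simp at hlen
  | cons a t ih =>
    cases s' with
    | nil => simp at hlen
    | cons a' t' =>
      have ha := hs a (by simp)
      have ha' := hs' a' (by simp)
      have ht : Ok N t := fun j hj => hs j (by simp [hj])
      have ht' : Ok N t' := fun j hj => hs' j (by simp [hj])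
      have hl : t.length = t'.length := by simpa using hlen
      obtain ⟨b1, b2⟩ := pi1_bounds hN ht
      obtain ⟨b1', b2'⟩ := pi1_bounds hN ht'
      rw [pi1_cons, pi1_cons, hl] at h
      rw [hl] at b1 b2
      have hgap := cgeo_mul N t'.length
      have hp : (0:ℤ) < (N:ℤ) ^ t'.length := by
        have : (0:ℤ) < (N:ℤ) := by exact_mod_cast hN
        positivity
      have haa : a = a' := by
        by_contra hne
        have hne' : (a:ℤ) ≠ (a':ℤ) := by exact_mod_cast hne
        rcases lt_or_gt_of_ne hne' with hx | hx
        · have h1 : (1:ℤ) ≤ (a':ℤ) - a := by omega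
          have := mul_le_mul_of_nonneg_right h1 hp.le
          rw [one_mul] at this
          linarith
        · have h1 : (1:ℤ) ≤ (a:ℤ) - a' := by omega
          have := mul_le_mul_of_nonneg_right h1 hp.le
          rw [one_mul] at this
          linarith
      subst haa
      have hpt : pi1 N t = pi1 N t' := by omega
      rw [ih hl ht ht' hpt]

lemma pi1_replicate (N m a : ℕ) : pi1 N (List.replicate m a) = (a : ℤ) * cgeo N m := by
  induction m with
  | zero => simp [pi1, cgeo]
  | succ n ih =>
    rw [List.replicate_succ, pi1_cons, ih, cgeo_succ, List.length_replicate]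
    ring

section
variable {p : ℕ → ℝ} {N : ℕ} (hN : 2 ≤ N) (hp : ∀ j, 1 ≤ j → j ≤ N → 0 < p j)
  (hsum : ∑ j ∈ Finset.Icc 1 N, p j = 1)

include hN hp hsum in
lemma R1_rep (m : ℕ) :
    L1 p (List.replicate m N) + len1 p (List.replicate m N) = 1 := by
  induction m with
  | zero => simp [L1, len1]
  | succ n ihm =>
    rw [List.replicate_succ]
    have key2 : L1 p (N :: List.replicate n N) + len1 p (N :: List.replicate n N)
        = p N * (L1 p (List.replicate n N) + len1 p (List.replicate n N)) + qB p N := by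
      simp [L1, len1_cons]; ring
    rw [key2, ihm]
    have h1 : qB p (N + 1) = 1 := qB_top hsum
    rw [qB_succ (by omega)] at h1
    linarith

lemma L1_rep_one (m : ℕ) : L1 p (List.replicate m 1) = 0 := by
  induction m with
  | zero => simp [L1]
  | succ n ihm =>
    rw [List.replicate_succ]
    simp only [L1, qB_one, ihm]
    ring

lemma digit_le {a a' : ℕ} {t t' : List ℕ} (hN1 : 1 ≤ N)
    (hl : t.length = t'.length) (ht : Ok N t) (ht' : Ok N t')
    (ha : 1 ≤ a ∧ a ≤ N) (ha' : 1 ≤ a' ∧ a' ≤ N)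
    (h : pi1 N (a :: t) ≤ pi1 N (a' :: t')) : a ≤ a' := by
  by_contra hc
  push_neg at hc
  obtain ⟨b1, b2⟩ := pi1_bounds hN1 ht
  obtain ⟨b1', b2'⟩ := pi1_bounds hN1 ht'
  rw [pi1_cons, pi1_cons, hl] at h
  rw [hl] at b1 b2
  have hgap := cgeo_mul N t'.length
  have hX : (0:ℤ) < (N:ℤ) ^ t'.length := by
    have : (0:ℤ) < (N:ℤ) := by exact_mod_cast hN1
    positivity
  have h1 : (1:ℤ) ≤ (a:ℤ) - a' := by
    have : (a':ℤ) < a := by exact_mod_cast hc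
    omega
  have := mul_le_mul_of_nonneg_right h1 hX.le
  rw [one_mul] at this
  linarith

include hN hp hsum in
lemma mono1 {s s' : List ℕ} (hlen : s.length = s'.length)
    (hs : Ok N s) (hs' : Ok N s') (h : pi1 N s < pi1 N s') :
    L1 p s + len1 p s ≤ L1 p s' := by
  have hN1 : 1 ≤ N := by omega
  induction s generalizing s' with
  | nil =>
    cases s' with
    | nil => simp [pi1] at h
    | cons a t => simp at hlen
  | cons a t ih =>
    cases s' with
    | nil => simp at hlen
    | cons a' t' =>
      have ha := hs a (by simp)
      have ha' := hs' a' (by simp)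
      have ht : Ok N t := fun j hj => hs j (by simp [hj])
      have ht' : Ok N t' := fun j hj => hs' j (by simp [hj])
      have hl : t.length = t'.length := by simpa using hlen
      have hpa := hp a ha.1 ha.2
      have hpa' := hp a' ha'.1 ha'.2
      have hL' : 0 ≤ L1 p t' := L1_nonneg hp ht'
      have hR : L1 p t + len1 p t ≤ 1 := R1_le_one hp hsum ht
      have key : L1 p (a :: t) + len1 p (a :: t)
          = p a * (L1 p t + len1 p t) + qB p a := by simp [L1, len1_cons]; ring
      have key' : L1 p (a' :: t') = p a' * L1 p t' + qB p a' := rfl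
      have haa : a ≤ a' := digit_le hN1 hl ht ht' ha ha' h.le
      rcases Nat.lt_or_ge a a' with hx | hx
      · rw [key, key']
        calc p a * (L1 p t + len1 p t) + qB p a ≤ p a * 1 + qB p a := by nlinarith
          _ = qB p (a + 1) := by rw [qB_succ ha.1]; ring
          _ ≤ qB p a' := qB_mono hp (by omega) (by omega) (by omega)
          _ ≤ p a' * L1 p t' + qB p a' := by nlinarith
      · have haa' : a = a' := by omega
        subst haa'
        rw [pi1_cons, pi1_cons, hl] at h
        have hpt : pi1 N t < pi1 N t' := by omega
        have := ih hl ht ht' hpt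
        rw [key, key']
        nlinarith

include hN hp hsum in
lemma adj1 {s s' : List ℕ} (hlen : s.length = s'.length)
    (hs : Ok N s) (hs' : Ok N s') (h : pi1 N s' = pi1 N s + 1) :
    L1 p s' = L1 p s + len1 p s := by
  have hN1 : 1 ≤ N := by omega
  induction s generalizing s' with
  | nil =>
    cases s' with
    | nil => simp [pi1] at h
    | cons a t => simp at hlen
  | cons a t ih =>
    cases s' with
    | nil => simp at hlen
    | cons a' t' =>
      have ha := hs a (by simp)
      have ha' := hs' a' (by simp)
      have ht : Ok N t := fun j hj => hs j (by simp [hj])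
      have ht' : Ok N t' := fun j hj => hs' j (by simp [hj])
      have hl : t.length = t'.length := by simpa using hlen
      have hpa := hp a ha.1 ha.2
      have key : L1 p (a :: t) + len1 p (a :: t)
          = p a * (L1 p t + len1 p t) + qB p a := by simp [L1, len1_cons]; ring
      have key' : L1 p (a' :: t') = p a' * L1 p t' + qB p a' := rfl
      have haa : a ≤ a' := digit_le hN1 hl ht ht' ha ha' (by omega)
      obtain ⟨b1, b2⟩ := pi1_bounds hN1 ht
      obtain ⟨b1', b2'⟩ := pi1_bounds hN1 ht'
      rw [hl] at b1 b2
      have hgap := cgeo_mul N t'.length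
      have hX : (0:ℤ) < (N:ℤ) ^ t'.length := by
        have : (0:ℤ) < (N:ℤ) := by exact_mod_cast hN1
        positivity
      rw [pi1_cons, pi1_cons, hl] at h
      rcases Nat.lt_or_ge a a' with hx | hx
      · -- a' ≥ a+1; forced: a' = a+1, t maximal, t' minimal
        have hx1 : (1:ℤ) ≤ (a':ℤ) - a := by
          have : (a:ℤ) < a' := by exact_mod_cast hx
          omega
        have hforce : (a':ℤ) - a = 1 ∧ pi1 N t = (N:ℤ) * cgeo N t'.length
            ∧ pi1 N t' = cgeo N t'.length := by
          by_contra hcon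
          have hmul := mul_le_mul_of_nonneg_right hx1 hX.le
          rw [one_mul] at hmul
          rcases le_or_gt ((a':ℤ) - a) 1 with h1 | h1
          · have he : (a':ℤ) - a = 1 := le_antisymm h1 hx1
            have heq : ((a':ℤ) - a) * (N:ℤ) ^ t'.length = (N:ℤ) ^ t'.length := by
              rw [he, one_mul]
            -- pi1 t - pi1 t' = X - 1
            have : pi1 N t - pi1 N t' = (N:ℤ) ^ t'.length - 1 := by nlinarith
            have h2 : pi1 N t = (N:ℤ) * cgeo N t'.length := by omega
            have h3 : pi1 N t' = cgeo N t'.length := by omega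
            exact hcon ⟨he, h2, h3⟩
          · have h2 : (2:ℤ) ≤ (a':ℤ) - a := by omega
            have := mul_le_mul_of_nonneg_right h2 hX.le
            nlinarith
        obtain ⟨he, hmax, hmin⟩ := hforce
        have htmax : t = List.replicate t.length N := by
          apply pi1_inj hN1 (by simp [hl]) ht
          · intro j hj
            have := List.eq_of_mem_replicate hj
            omega
          · rw [pi1_replicate, hl]; exact_mod_cast hmax
        have htmin : t' = List.replicate t'.length 1 := by
          apply pi1_inj hN1 (by simp) ht'
          · intro j hj
            have := List.eq_of_mem_replicate hj
            omega
          · rw [pi1_replicate]; simpa using hmin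
        have haa' : a' = a + 1 := by omega
        have hRmax : L1 p t + len1 p t = 1 := by
          rw [htmax]; exact R1_rep hN hp hsum t.length
        have hLmin : L1 p t' = 0 := by
          rw [htmin]; exact L1_rep_one t'.length
        rw [key, key', hLmin, hRmax, haa', qB_succ ha.1]
        ring
      · have haa' : a = a' := by omega
        subst haa'
        have hpt : pi1 N t' = pi1 N t + 1 := by omega
        have := ih hl ht ht' hpt
        rw [key, key', this]

include hN hp hsum in
lemma gap1 {s s' : List ℕ} (hlen : s.length = s'.length)
    (hs : Ok N s) (hs' : Ok N s') (h : pi1 N s + 2 ≤ pi1 N s') :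
    L1 p s + len1 p s < L1 p s' := by
  have hN1 : 1 ≤ N := by omega
  induction s generalizing s' with
  | nil =>
    cases s' with
    | nil => simp [pi1] at h
    | cons a t => simp at hlen
  | cons a t ih =>
    cases s' with
    | nil => simp at hlen
    | cons a' t' =>
      have ha := hs a (by simp)
      have ha' := hs' a' (by simp)
      have ht : Ok N t := fun j hj => hs j (by simp [hj])
      have ht' : Ok N t' := fun j hj => hs' j (by simp [hj])
      have hl : t.length = t'.length := by simpa using hlen
      have hpa := hp a ha.1 ha.2
      have hpa' := hp a' ha'.1 ha'.2
      have hL' : 0 ≤ L1 p t' := L1_nonneg hp ht'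
      have hR : L1 p t + len1 p t ≤ 1 := R1_le_one hp hsum ht
      have key : L1 p (a :: t) + len1 p (a :: t)
          = p a * (L1 p t + len1 p t) + qB p a := by simp [L1, len1_cons]; ring
      have key' : L1 p (a' :: t') = p a' * L1 p t' + qB p a' := rfl
      have haa : a ≤ a' := digit_le hN1 hl ht ht' ha ha' (by omega)
      obtain ⟨b1, b2⟩ := pi1_bounds hN1 ht
      obtain ⟨b1', b2'⟩ := pi1_bounds hN1 ht'
      rw [hl] at b1 b2
      have hgap := cgeo_mul N t'.length
      have hX : (0:ℤ) < (N:ℤ) ^ t'.length := by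
        have : (0:ℤ) < (N:ℤ) := by exact_mod_cast hN1
        positivity
      rw [pi1_cons, pi1_cons, hl] at h
      rcases Nat.lt_or_ge ((a:ℕ)+1) a' with hx2 | hx2
      · -- a' ≥ a+2
        rw [key, key']
        calc p a * (L1 p t + len1 p t) + qB p a ≤ p a * 1 + qB p a := by nlinarith
          _ = qB p (a+1) := by rw [qB_succ ha.1]; ring
          _ ≤ qB p (a'-1) := qB_mono hp (by omega) (by omega) (by omega)
          _ < qB p a' := by
            have hstep : qB p ((a'-1)+1) = qB p (a'-1) + p (a'-1) := qB_succ (by omega)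
            have hpos := hp (a'-1) (by omega) (by omega)
            have : (a'-1)+1 = a' := by omega
            rw [this] at hstep
            linarith
          _ ≤ p a' * L1 p t' + qB p a' := by nlinarith
      rcases Nat.lt_or_ge a a' with hx | hx
      · -- a' = a+1
        have haa' : a' = a + 1 := by omega
        have he : (a':ℤ) = (a:ℤ) + 1 := by exact_mod_cast haa'
        have hcases : pi1 N t < (N:ℤ) * cgeo N t'.length ∨ cgeo N t'.length < pi1 N t' := by
          by_contra hcon
          push_neg at hcon
          obtain ⟨c1, c2⟩ := hcon
          have e1 : pi1 N t = (N:ℤ) * cgeo N t'.length := le_antisymm b2 c1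
          have e2 : pi1 N t' = cgeo N t'.length := le_antisymm c2 b1'
          rw [e1, e2, he] at h
          nlinarith [hgap]
        rcases hcases with hc | hc
        · -- t is not maximal: R t < 1
          have htne : t ≠ List.replicate t.length N := by
            intro hcc
            rw [hcc, pi1_replicate, hl] at hc
            omega
          have hRt : L1 p t + len1 p t < 1 := R1_lt_one hp hsum ht htne
          rw [key, key']
          calc p a * (L1 p t + len1 p t) + qB p a < p a * 1 + qB p a := by nlinarith
            _ = qB p (a+1) := by rw [qB_succ ha.1]; ring
            _ = qB p a' := by rw [haa']
            _ ≤ p a' * L1 p t' + qB p a' := by nlinarith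
        · -- t' is not minimal: L t' > 0
          have htne : t' ≠ List.replicate t'.length 1 := by
            intro hcc
            rw [hcc, pi1_replicate] at hc
            simp at hc
          have hLt : 0 < L1 p t' := L1_pos hp ht' htne
          rw [key, key']
          have hs1 : p a * (L1 p t + len1 p t) + qB p a ≤ p a * 1 + qB p a := by
            linarith [mul_le_mul_of_nonneg_left hR hpa.le]
          calc p a * (L1 p t + len1 p t) + qB p a ≤ p a * 1 + qB p a := hs1
            _ = qB p (a+1) := by rw [qB_succ ha.1]; ring
            _ = qB p a' := by rw [haa']
            _ < p a' * L1 p t' + qB p a' := by linarith [mul_pos hpa' hLt]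
      · have haa' : a = a' := by omega
        subst haa'
        have hpt : pi1 N t + 2 ≤ pi1 N t' := by omega
        have := ih hl ht ht' hpt
        rw [key, key']
        linarith [mul_lt_mul_of_pos_left this hpa]

end

lemma piB_eq_pi1 {d : ℕ} (Nv : Fin d → ℕ) (l : List (Fin d → ℕ)) (i : Fin d) :
    piB Nv l i = pi1 (Nv i) (l.map fun v => v i) := by
  rw [pi1, List.foldl_map]
  rfl

lemma affine_image {d : ℕ} (c t a b : Fin d → ℝ) (hc : ∀ i, 0 < c i)
    (hab : ∀ i, a i ≤ b i) :
    (fun x : Fin d → ℝ => fun i => c i * x i + t i) ''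
        Set.univ.pi (fun i => Set.Icc (a i) (b i))
      = Set.univ.pi (fun i => Set.Icc (c i * a i + t i) (c i * b i + t i)) := by
  ext y
  constructor
  · rintro ⟨x, hx, rfl⟩
    intro i _
    have hxi := hx i (by trivial)
    simp only [Set.mem_Icc] at hxi ⊢
    constructor
    · have := mul_le_mul_of_nonneg_left hxi.1 (hc i).le
      linarith
    · have := mul_le_mul_of_nonneg_left hxi.2 (hc i).le
      linarith
  · intro hy
    refine ⟨fun i => (y i - t i) / c i, ?_, ?_⟩
    · intro i _
      have hyi := hy i (by trivial)
      simp only [Set.mem_Icc] at hyi ⊢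
      rw [le_div_iff₀ (hc i), div_le_iff₀ (hc i)]
      constructor <;> nlinarith [hyi.1, hyi.2]
    · funext i
      have := (hc i).ne'
      field_simp
      ring

lemma psiBW_image {d : ℕ} (p : Fin d → ℕ → ℝ) (Nv : Fin d → ℕ)
    (hp : ∀ i j, 1 ≤ j → j ≤ Nv i → 0 < p i j)
    (l : List (Fin d → ℕ)) (hl : ∀ v ∈ l, ∀ i, 1 ≤ v i ∧ v i ≤ Nv i) :
    psiBW p l '' Q0B d = Set.univ.pi fun i =>
      Set.Icc (L1 (p i) (l.map fun v => v i))
        (L1 (p i) (l.map fun v => v i) + len1 (p i) (l.map fun v => v i)) := by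
  induction l with
  | nil =>
    simp only [psiBW, List.foldr_nil, List.map_nil, Set.image_id, Q0B]
    simp [L1, len1_nil]
  | cons v l ih =>
    have hl' : ∀ u ∈ l, ∀ i, 1 ≤ u i ∧ u i ≤ Nv i := fun u hu => hl u (by simp [hu])
    have hOk : ∀ i, ∀ j ∈ (l.map fun u => u i), 1 ≤ j ∧ j ≤ Nv i := by
      intro i j hj
      simp only [List.mem_map] at hj
      obtain ⟨u, hu, rfl⟩ := hj
      exact hl' u hu i
    have hab : ∀ i, L1 (p i) (l.map fun u => u i)
        ≤ L1 (p i) (l.map fun u => u i) + len1 (p i) (l.map fun u => u i) := by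
      intro i
      have := len1_pos (N := Nv i) (fun j h1 h2 => hp i j h1 h2) (hOk i)
      linarith
    have hstep : psiBW p (v :: l) = psiB p v ∘ psiBW p l := rfl
    rw [hstep, Set.image_comp, ih hl']
    have hv := hl v (by simp)
    have hshow : psiB p v = fun x : Fin d → ℝ => fun i =>
        (p i (v i)) * x i + qB (p i) (v i) := rfl
    rw [hshow, affine_image _ _ _ _ (fun i => hp i (v i) (hv i).1 (hv i).2) hab]
    apply Set.pi_congr rfl
    intro i _
    simp only [List.map_cons]
    have e1 : L1 (p i) (v i :: (l.map fun u => u i))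
        = p i (v i) * L1 (p i) (l.map fun u => u i) + qB (p i) (v i) := rfl
    rw [e1, len1_cons]
    congr 1
    ring

end B16

open B16 in
theorem stmt16 (d : ℕ) (Nv : Fin d → ℕ) (p : Fin d → ℕ → ℝ)
    (D : Finset (Fin d → ℕ)) (hB : BSetup d Nv p D)
    (k : ℕ) (hk : 1 ≤ k) (w w' : List (Fin d → ℕ))
    (hw : w ∈ BWords D k) (hw' : w' ∈ BWords D k) :
    (((psiBW p w '' Q0B d) ∩ (psiBW p w' '' Q0B d)).Nonempty ↔
      ∀ i, |piB Nv w i - piB Nv w' i| ≤ 1) ∧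
    (((psiBW p w '' Q0B d) ∩ (psiBW p w' '' Q0B d)).Nonempty →
      ∃ a b : Fin d → ℝ, (∀ i, a i ≤ b i) ∧
        (psiBW p w '' Q0B d) ∩ (psiBW p w' '' Q0B d) =
          Set.univ.pi (fun i => Set.Icc (a i) (b i)) ∧
        (({i : Fin d | a i < b i}.ncard : ℤ) =
          (d : ℤ) - ∑ i, |piB Nv w i - piB Nv w' i|)) := by
  classical
  obtain ⟨hd2, hNv, hp, hsum, hD, -, -⟩ := hB
  obtain ⟨hwlen, hwD⟩ := hw
  obtain ⟨hw'len, hw'D⟩ := hw'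
  have hwdig : ∀ v ∈ w, ∀ i, 1 ≤ v i ∧ v i ≤ Nv i := fun v hv i => hD v (hwD v hv) i
  have hw'dig : ∀ v ∈ w', ∀ i, 1 ≤ v i ∧ v i ≤ Nv i := fun v hv i => hD v (hw'D v hv) i
  have him : psiBW p w '' Q0B d = Set.univ.pi fun i =>
      Set.Icc (L1 (p i) (w.map fun v => v i))
        (L1 (p i) (w.map fun v => v i) + len1 (p i) (w.map fun v => v i)) :=
    psiBW_image p Nv hp w hwdig
  have him' : psiBW p w' '' Q0B d = Set.univ.pi fun i =>
      Set.Icc (L1 (p i) (w'.map fun v => v i))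
        (L1 (p i) (w'.map fun v => v i) + len1 (p i) (w'.map fun v => v i)) :=
    psiBW_image p Nv hp w' hw'dig
  set a : Fin d → ℝ := fun i =>
    max (L1 (p i) (w.map fun v => v i)) (L1 (p i) (w'.map fun v => v i)) with ha
  set b : Fin d → ℝ := fun i =>
    min (L1 (p i) (w.map fun v => v i) + len1 (p i) (w.map fun v => v i))
      (L1 (p i) (w'.map fun v => v i) + len1 (p i) (w'.map fun v => v i)) with hb
  have hinter : (psiBW p w '' Q0B d) ∩ (psiBW p w' '' Q0B d)
      = Set.univ.pi fun i => Set.Icc (a i) (b i) := by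
    rw [him, him', ← Set.pi_inter_distrib]
    apply Set.pi_congr rfl
    intro i _
    exact Set.Icc_inter_Icc
  have hOk : ∀ i, B16.Ok (Nv i) (w.map fun v => v i) := by
    intro i j hj
    simp only [List.mem_map] at hj
    obtain ⟨v, hv, rfl⟩ := hj
    exact hwdig v hv i
  have hOk' : ∀ i, B16.Ok (Nv i) (w'.map fun v => v i) := by
    intro i j hj
    simp only [List.mem_map] at hj
    obtain ⟨v, hv, rfl⟩ := hj
    exact hw'dig v hv i
  have hlen : ∀ i, (w.map fun v => v i).length = (w'.map fun v => v i).length := by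
    simp [hwlen, hw'len]
  have hpw : ∀ i, piB Nv w i = pi1 (Nv i) (w.map fun v => v i) :=
    fun i => piB_eq_pi1 Nv w i
  have hpw' : ∀ i, piB Nv w' i = pi1 (Nv i) (w'.map fun v => v i) :=
    fun i => piB_eq_pi1 Nv w' i
  have key : ∀ i, (a i ≤ b i ↔ |piB Nv w i - piB Nv w' i| ≤ 1)
      ∧ (a i < b i ↔ piB Nv w i - piB Nv w' i = 0) := by
    intro i
    have hNi := hNv i
    have hpi : ∀ j, 1 ≤ j → j ≤ Nv i → 0 < p i j := hp i
    have hsi := hsum i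
    have hlp : 0 < len1 (p i) (w.map fun v => v i) := len1_pos hpi (hOk i)
    have hlp' : 0 < len1 (p i) (w'.map fun v => v i) := len1_pos hpi (hOk' i)
    rw [hpw i, hpw' i, abs_le]
    simp only [ha, hb]
    set s := w.map fun v => v i with hs
    set s' := w'.map fun v => v i with hs'
    set m := pi1 (Nv i) s with hm
    set m' := pi1 (Nv i) s' with hm'
    rcases lt_trichotomy m m' with hlt | heq | hgt
    · rcases eq_or_lt_of_le (by omega : m + 1 ≤ m') with he | hge2
      · have hadj : L1 (p i) s' = L1 (p i) s + len1 (p i) s :=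
          adj1 hNi hpi hsi (hlen i) (hOk i) (hOk' i) he.symm
        have hmax : max (L1 (p i) s) (L1 (p i) s') = L1 (p i) s' :=
          max_eq_right (by linarith)
        have hmin : min (L1 (p i) s + len1 (p i) s) (L1 (p i) s' + len1 (p i) s')
            = L1 (p i) s + len1 (p i) s := min_eq_left (by linarith)
        rw [hmax, hmin]
        constructor
        · constructor
          · intro _; omega
          · intro _; linarith
        · constructor
          · intro hcon; linarith
          · intro hcon; omega
      · have hgap : L1 (p i) s + len1 (p i) s < L1 (p i) s' :=
          gap1 hNi hpi hsi (hlen i) (hOk i) (hOk' i) (by omega)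
        have h1 := min_le_left (L1 (p i) s + len1 (p i) s) (L1 (p i) s' + len1 (p i) s')
        have h2 := le_max_right (L1 (p i) s) (L1 (p i) s')
        constructor
        · constructor
          · intro hcon; linarith
          · intro hcon; omega
        · constructor
          · intro hcon; linarith
          · intro hcon; omega
    · have hseq : s = s' := pi1_inj (by omega) (hlen i) (hOk i) (hOk' i) heq
      rw [hseq]
      have hmax : max (L1 (p i) s') (L1 (p i) s') = L1 (p i) s' := max_self _
      have hmin : min (L1 (p i) s' + len1 (p i) s') (L1 (p i) s' + len1 (p i) s')
          = L1 (p i) s' + len1 (p i) s' := min_self _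
      rw [hmax, hmin]
      rw [hseq] at hlp
      constructor
      · constructor
        · intro _; omega
        · intro _; linarith
      · constructor
        · intro _; omega
        · intro _; linarith
    · rcases eq_or_lt_of_le (by omega : m' + 1 ≤ m) with he | hge2
      · have hadj : L1 (p i) s = L1 (p i) s' + len1 (p i) s' :=
          adj1 hNi hpi hsi (hlen i).symm (hOk' i) (hOk i) he.symm
        have hmax : max (L1 (p i) s) (L1 (p i) s') = L1 (p i) s :=
          max_eq_left (by linarith)
        have hmin : min (L1 (p i) s + len1 (p i) s) (L1 (p i) s' + len1 (p i) s')
            = L1 (p i) s' + len1 (p i) s' := min_eq_right (by linarith)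
        rw [hmax, hmin]
        constructor
        · constructor
          · intro _; omega
          · intro _; linarith
        · constructor
          · intro hcon; linarith
          · intro hcon; omega
      · have hgap : L1 (p i) s' + len1 (p i) s' < L1 (p i) s :=
          gap1 hNi hpi hsi (hlen i).symm (hOk' i) (hOk i) (by omega)
        have h1 := min_le_right (L1 (p i) s + len1 (p i) s) (L1 (p i) s' + len1 (p i) s')
        have h2 := le_max_left (L1 (p i) s) (L1 (p i) s')
        constructor
        · constructor
          · intro hcon; linarith
          · intro hcon; omega
        · constructor
          · intro hcon; linarith
          · intro hcon; omega
  constructor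
  · rw [hinter, Set.univ_pi_nonempty_iff]
    constructor
    · intro h i
      rw [← (key i).1]
      exact Set.nonempty_Icc.mp (h i)
    · intro h i
      exact Set.nonempty_Icc.mpr ((key i).1.mpr (h i))
  · intro hne
    have hab : ∀ i, a i ≤ b i := by
      rw [hinter, Set.univ_pi_nonempty_iff] at hne
      intro i
      exact Set.nonempty_Icc.mp (hne i)
    refine ⟨a, b, hab, hinter, ?_⟩
    have habs : ∀ i, |piB Nv w i - piB Nv w' i| ≤ 1 := fun i => (key i).1.mp (hab i)
    have hset : {i : Fin d | a i < b i} = {i : Fin d | piB Nv w i - piB Nv w' i = 0} := by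
      ext i
      exact (key i).2
    rw [hset]
    have hncard : {i : Fin d | piB Nv w i - piB Nv w' i = 0}.ncard
        = (Finset.univ.filter fun i : Fin d => piB Nv w i - piB Nv w' i = 0).card := by
      rw [Set.ncard_eq_toFinset_card']
      congr 1
      ext i
      simp
    rw [hncard]
    have hsum2 : ∑ i, |piB Nv w i - piB Nv w' i|
        = ((Finset.univ.filter fun i : Fin d =>
            ¬(piB Nv w i - piB Nv w' i = 0)).card : ℤ) := by
      have e1 : ∀ i ∈ Finset.univ, |piB Nv w i - piB Nv w' i|
          = (if piB Nv w i - piB Nv w' i = 0 then (0:ℤ) else 1) := by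
        intro i _
        have h1 := habs i
        rw [abs_le] at h1
        split_ifs with h
        · rw [h]; norm_num
        · have h2 : piB Nv w i - piB Nv w' i = -1 ∨ piB Nv w i - piB Nv w' i = 1 := by
            omega
          rcases h2 with h2 | h2 <;> rw [h2] <;> norm_num
      rw [Finset.sum_congr rfl e1, Finset.sum_ite, Finset.sum_const, Finset.sum_const]
      simp
    rw [hsum2]
    have hpart := Finset.card_filter_add_card_filter_not
      (s := (Finset.univ : Finset (Fin d)))
      (p := fun i : Fin d => piB Nv w i - piB Nv w' i = 0)
    rw [Finset.card_univ, Fintype.card_fin] at hpart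
    push_cast
    omega
end

section
/- Let 𝐰, 𝐰' ∈ D* be words of equal length in the digit set of a Barański sponge and let u, u' ∈ D. If π(𝐰u) − π(𝐰'u') = π(𝐰) − π(𝐰') and this vector is a nonzero vector with all coordinates in {−1,0,1}, then ψ_𝐰(K) ∩ ψ_{𝐰'}(K) ≠ ∅, where K is the Barański sponge. -/
open Set

/-!
Let `x_u` be the fixed point of the contraction `ψ_u`; it lies in `K`, and its `i`-th coordinate
is `0` if `u_i = 1` and `1` if `u_i = N_i`. Since `π(𝐰u) - π(𝐰'u') = π(𝐰) - π(𝐰')`, in each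
coordinate `u'_i - u_i = (N_i - 1)(π_i(𝐰) - π_i(𝐰'))`. So either `π_i(𝐰) = π_i(𝐰')`, whence
`𝐰` and `𝐰'` have the same `i`-th digits and `u_i = u'_i`, or, say, `π_i(𝐰) = π_i(𝐰') + 1` with
`u_i = 1` and `u'_i = N_i`: then the `i`-th projections of the cylinders of `𝐰'` and `𝐰` are
adjacent intervals and `ψ_𝐰(x_u)`, `ψ_𝐰'(x_u')` both sit at their common endpoint. In all
cases `ψ_𝐰(x_u) = ψ_𝐰'(x_u')`.
-/

namespace Sponge

open Filter Topology

/-- The `i`-th coordinate of `psiB p w x` is `coordMap (p i) (w i) (x i)`. -/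
noncomputable def coordMap (P : ℕ → ℝ) (j : ℕ) (t : ℝ) : ℝ :=
  P j * t + ∑ m ∈ Finset.Ico 1 j, P m

noncomputable def wordMap (P : ℕ → ℝ) (A : List ℕ) : ℝ → ℝ :=
  A.foldr (fun j g => coordMap P j ∘ g) id

def digitVal (N : ℕ) (A : List ℕ) : ℤ :=
  A.foldl (fun (acc : ℤ) (j : ℕ) => N * acc + j) 0

noncomputable def fixedPt (P : ℕ → ℝ) (j : ℕ) : ℝ :=
  (∑ m ∈ Finset.Ico 1 j, P m) / (1 - P j)

section Digits

variable {N : ℕ}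

lemma digitVal_append_singleton (A : List ℕ) (a : ℕ) :
    digitVal N (A ++ [a]) = N * digitVal N A + a := by
  simp [digitVal, List.foldl_append]

lemma digit_eq_of_mul_add_eq {a b : ℕ} {x y : ℤ} (ha : 1 ≤ a ∧ a ≤ N) (hb : 1 ≤ b ∧ b ≤ N)
    (h : N * x + a = N * y + b) : a = b ∧ x = y := by
  have hdvd : (N : ℤ) ∣ (a : ℤ) - b := ⟨y - x, by linear_combination h⟩
  have hab : (a : ℤ) - b = 0 := Int.eq_zero_of_abs_lt_dvd hdvd (by rw [abs_lt]; omega)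
  refine ⟨by omega, mul_left_cancel₀ (show (N : ℤ) ≠ 0 by omega) (by linarith)⟩

lemma digit_cases_of_mul_add_eq_add_one {a b : ℕ} {x y : ℤ} (ha : 1 ≤ a ∧ a ≤ N)
    (hb : 1 ≤ b ∧ b ≤ N) (h : N * x + a = N * y + b + 1) :
    (a = b + 1 ∧ x = y) ∨ (a = 1 ∧ b = N ∧ x = y + 1) := by
  by_cases hba : b + 1 ≤ a
  · exact .inl (digit_eq_of_mul_add_eq ha ⟨by omega, by omega⟩ (by push_cast; linarith))
  · have hdvd : (N : ℤ) ∣ (a : ℤ) + N - b - 1 := ⟨y + 1 - x, by linear_combination h⟩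
    have hab : (a : ℤ) + N - b - 1 = 0 :=
      Int.eq_zero_of_abs_lt_dvd hdvd (by rw [abs_lt]; omega)
    refine .inr ⟨by omega, by omega, mul_left_cancel₀ (show (N : ℤ) ≠ 0 by omega) ?_⟩
    linear_combination h - hab

lemma digitVal_injective {A B : List ℕ} (hlen : A.length = B.length)
    (hA : ∀ j ∈ A, 1 ≤ j ∧ j ≤ N) (hB : ∀ j ∈ B, 1 ≤ j ∧ j ≤ N)
    (h : digitVal N A = digitVal N B) : A = B := by
  induction A using List.reverseRecOn generalizing B with
  | nil => exact (List.length_eq_zero_iff.mp hlen.symm).symm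
  | append_singleton A a ih =>
    obtain ⟨B, b, rfl⟩ := (List.eq_nil_or_concat' B).resolve_left (by rintro rfl; simp at hlen)
    rw [digitVal_append_singleton, digitVal_append_singleton] at h
    obtain ⟨rfl, hval⟩ := digit_eq_of_mul_add_eq (hA a (by simp)) (hB b (by simp)) h
    rw [ih (by simpa using hlen) (fun j hj => hA j (by simp [hj]))
      (fun j hj => hB j (by simp [hj])) hval]

end Digits

section Maps

variable {N : ℕ} {P : ℕ → ℝ}

lemma wordMap_append (A B : List ℕ) : wordMap P (A ++ B) = wordMap P A ∘ wordMap P B := by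
  induction A with
  | nil => rfl
  | cons a A ih => simp only [wordMap, List.cons_append, List.foldr_cons] at ih ⊢; rw [ih]; rfl

lemma wordMap_append_singleton (A : List ℕ) (a : ℕ) :
    wordMap P (A ++ [a]) = wordMap P A ∘ coordMap P a := by
  rw [wordMap_append]; rfl

lemma sum_Ico_one_eq_one_sub (hN : 1 ≤ N) (hsum : ∑ j ∈ Finset.Icc 1 N, P j = 1) :
    ∑ j ∈ Finset.Ico 1 N, P j = 1 - P N := by
  rw [← hsum, ← Finset.Ico_add_one_right_eq_Icc, Finset.sum_Ico_succ_top hN]; ring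

lemma coordMap_one_zero : coordMap P 1 0 = 0 := by simp [coordMap]

lemma coordMap_top_one (hN : 1 ≤ N) (hsum : ∑ j ∈ Finset.Icc 1 N, P j = 1) :
    coordMap P N 1 = 1 := by
  rw [coordMap, sum_Ico_one_eq_one_sub hN hsum]; ring

lemma coordMap_one_eq_succ_zero {b : ℕ} (hb : 1 ≤ b) : coordMap P b 1 = coordMap P (b + 1) 0 := by
  simp only [coordMap, Finset.sum_Ico_succ_top hb]; ring

/-- Consecutive cylinder intervals of the same level touch. -/
lemma wordMap_one_eq_zero_of_digitVal_eq_add_one (hsum : ∑ j ∈ Finset.Icc 1 N, P j = 1)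
    {A B : List ℕ} (hlen : A.length = B.length)
    (hA : ∀ j ∈ A, 1 ≤ j ∧ j ≤ N) (hB : ∀ j ∈ B, 1 ≤ j ∧ j ≤ N)
    (h : digitVal N A = digitVal N B + 1) : wordMap P B 1 = wordMap P A 0 := by
  induction A using List.reverseRecOn generalizing B with
  | nil => simp [List.length_eq_zero_iff.mp hlen.symm, digitVal] at h
  | append_singleton A a ih =>
    obtain ⟨B, b, rfl⟩ := (List.eq_nil_or_concat' B).resolve_left (by rintro rfl; simp at hlen)
    have hlen' : A.length = B.length := by simpa using hlen
    have hA' : ∀ j ∈ A, 1 ≤ j ∧ j ≤ N := fun j hj => hA j (by simp [hj])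
    have hB' : ∀ j ∈ B, 1 ≤ j ∧ j ≤ N := fun j hj => hB j (by simp [hj])
    have hb := hB b (by simp)
    rw [digitVal_append_singleton, digitVal_append_singleton] at h
    rw [wordMap_append_singleton, wordMap_append_singleton, Function.comp_apply,
      Function.comp_apply]
    rcases digit_cases_of_mul_add_eq_add_one (hA a (by simp)) hb h with
      ⟨rfl, hval⟩ | ⟨rfl, rfl, hval⟩
    · rw [digitVal_injective hlen' hA' hB' hval, coordMap_one_eq_succ_zero hb.1]
    · rw [coordMap_top_one hb.1 hsum, coordMap_one_zero, ih hlen' hA' hB' hval]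

lemma lt_one_of_mem_Icc (hN : 2 ≤ N) (hpos : ∀ j, 1 ≤ j → j ≤ N → 0 < P j)
    (hsum : ∑ j ∈ Finset.Icc 1 N, P j = 1) {j : ℕ} (hj : 1 ≤ j ∧ j ≤ N) : P j < 1 := by
  obtain ⟨j', hj'⟩ : ∃ j', j' ≠ j ∧ 1 ≤ j' ∧ j' ≤ N :=
    ⟨if j = 1 then 2 else 1, by split_ifs <;> omega⟩
  rw [← hsum]
  refine Finset.single_lt_sum hj'.1 (Finset.mem_Icc.mpr hj) (Finset.mem_Icc.mpr hj'.2)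
    (hpos _ hj'.2.1 hj'.2.2) fun k hk _ => ?_
  obtain ⟨hk1, hkN⟩ := Finset.mem_Icc.mp hk
  exact (hpos k hk1 hkN).le

lemma coordMap_fixedPt {j : ℕ} (hj : P j ≠ 1) : coordMap P j (fixedPt P j) = fixedPt P j := by
  have : 1 - P j ≠ 0 := sub_ne_zero.mpr hj.symm
  rw [coordMap, fixedPt]; field_simp; ring

lemma fixedPt_one : fixedPt P 1 = 0 := by simp [fixedPt]

lemma fixedPt_top (hN : 1 ≤ N) (hsum : ∑ j ∈ Finset.Icc 1 N, P j = 1) (hP : P N ≠ 1) :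
    fixedPt P N = 1 := by
  rw [fixedPt, sum_Ico_one_eq_one_sub hN hsum, div_self (sub_ne_zero.mpr hP.symm)]

lemma iterate_coordMap {j : ℕ} (hj : P j ≠ 1) (n : ℕ) (t : ℝ) :
    (coordMap P j)^[n] t = fixedPt P j + P j ^ n * (t - fixedPt P j) := by
  induction n with
  | zero => simp
  | succ n ih =>
    have hfix := coordMap_fixedPt hj
    rw [Function.iterate_succ_apply', ih]
    simp only [coordMap] at hfix ⊢
    linear_combination hfix

lemma tendsto_iterate_coordMap {j : ℕ} (hj : |P j| < 1) (t : ℝ) :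
    Tendsto (fun n => (coordMap P j)^[n] t) atTop (𝓝 (fixedPt P j)) := by
  have hj1 : P j ≠ 1 := fun h => by simp [h] at hj
  simp_rw [iterate_coordMap hj1]
  simpa using ((tendsto_pow_atTop_nhds_zero_of_abs_lt_one hj).mul_const
    (t - fixedPt P j)).const_add (fixedPt P j)

theorem wordMap_fixedPt_eq (hN : 2 ≤ N) (hpos : ∀ j, 1 ≤ j → j ≤ N → 0 < P j)
    (hsum : ∑ j ∈ Finset.Icc 1 N, P j = 1) {A B : List ℕ} {a b : ℕ}
    (hlen : A.length = B.length) (hA : ∀ j ∈ A, 1 ≤ j ∧ j ≤ N) (hB : ∀ j ∈ B, 1 ≤ j ∧ j ≤ N)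
    (ha : 1 ≤ a ∧ a ≤ N) (hb : 1 ≤ b ∧ b ≤ N)
    (heq : digitVal N (A ++ [a]) - digitVal N (B ++ [b]) = digitVal N A - digitVal N B)
    (hsmall : |digitVal N A - digitVal N B| ≤ 1) :
    wordMap P A (fixedPt P a) = wordMap P B (fixedPt P b) := by
  rw [digitVal_append_singleton, digitVal_append_singleton] at heq
  have hdigits : (b : ℤ) - a = (N - 1) * (digitVal N A - digitVal N B) := by
    linear_combination -heq
  have htop : P N ≠ 1 := (lt_one_of_mem_Icc hN hpos hsum ⟨by omega, le_rfl⟩).ne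
  rcases abs_le.mp hsmall with ⟨hlo, hhi⟩
  obtain hval | hval | hval : digitVal N A = digitVal N B - 1 ∨ digitVal N A = digitVal N B ∨
      digitVal N A = digitVal N B + 1 := by omega
  · obtain ⟨rfl, rfl⟩ : a = N ∧ b = 1 := by rw [hval] at hdigits; constructor <;> nlinarith
    rw [fixedPt_one, fixedPt_top (by omega) hsum htop]
    exact wordMap_one_eq_zero_of_digitVal_eq_add_one hsum hlen.symm hB hA (by omega)
  · obtain rfl : a = b := by rw [hval] at hdigits; omega
    rw [digitVal_injective hlen hA hB hval]
  · obtain ⟨rfl, rfl⟩ : a = 1 ∧ b = N := by rw [hval] at hdigits; constructor <;> nlinarith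
    rw [fixedPt_one, fixedPt_top (by omega) hsum htop]
    exact (wordMap_one_eq_zero_of_digitVal_eq_add_one hsum hlen hA hB hval).symm

end Maps

section Coordinates

variable {d : ℕ} {p : Fin d → ℕ → ℝ}

lemma psiBW_apply (l : List (Fin d → ℕ)) (x : Fin d → ℝ) (i : Fin d) :
    psiBW p l x i = wordMap (p i) (l.map (· i)) (x i) := by
  induction l with
  | nil => rfl
  | cons v l ih => exact congrArg (coordMap (p i) (v i)) ih

lemma piB_eq_digitVal (Nv : Fin d → ℕ) (l : List (Fin d → ℕ)) (i : Fin d) :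
    piB Nv l i = digitVal (Nv i) (l.map (· i)) := by
  simp only [piB, digitVal, List.foldl_map]

lemma iterate_psiB_apply (w : Fin d → ℕ) (n : ℕ) (x : Fin d → ℝ) (i : Fin d) :
    (psiB p w)^[n] x i = (coordMap (p i) (w i))^[n] (x i) := by
  induction n with
  | zero => rfl
  | succ n ih => rw [Function.iterate_succ_apply', Function.iterate_succ_apply', ← ih]; rfl

lemma IsBAttractor.fixedPt_mem {D : Finset (Fin d → ℕ)} {K : Set (Fin d → ℝ)}
    (hK : IsBAttractor p D K) {w : Fin d → ℕ} (hw : w ∈ D) (hcontr : ∀ i, |p i (w i)| < 1) :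
    (fun i => fixedPt (p i) (w i)) ∈ K := by
  obtain ⟨⟨z, hz⟩, hKc, hKeq⟩ := hK
  have hmaps : MapsTo (psiB p w) K K := fun y hy => by
    rw [hKeq]; exact mem_biUnion hw (mem_image_of_mem _ hy)
  refine hKc.isClosed.mem_of_tendsto (b := atTop) (f := fun n => (psiB p w)^[n] z) ?_
    (Eventually.of_forall fun n => hmaps.iterate n hz)
  refine tendsto_pi_nhds.mpr fun i => ?_
  simp_rw [iterate_psiB_apply]
  exact tendsto_iterate_coordMap (hcontr i) (z i)

end Coordinates

end Sponge

open Sponge in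
theorem stmt17_general (d : ℕ) (Nv : Fin d → ℕ) (p : Fin d → ℕ → ℝ)
    (D : Finset (Fin d → ℕ)) (hB : BSetup d Nv p D)
    (K : Set (Fin d → ℝ)) (hK : IsBAttractor p D K)
    (k : ℕ) (w w' : List (Fin d → ℕ))
    (hw : w ∈ BWords D k) (hw' : w' ∈ BWords D k)
    (u u' : Fin d → ℕ) (hu : u ∈ D) (hu' : u' ∈ D)
    (heq : ∀ i, piB Nv (w ++ [u]) i - piB Nv (w' ++ [u']) i =
        piB Nv w i - piB Nv w' i)
    (hsmall : ∀ i, |piB Nv w i - piB Nv w' i| ≤ 1) :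
    ((psiBW p w '' K) ∩ (psiBW p w' '' K)).Nonempty := by
  obtain ⟨-, hNv, hpos, hsum, hD, -, -⟩ := hB
  have hcontr : ∀ v ∈ D, ∀ i, |p i (v i)| < 1 := fun v hv i =>
    abs_lt.mpr ⟨by linarith [hpos i (v i) (hD v hv i).1 (hD v hv i).2],
      lt_one_of_mem_Icc (hNv i) (hpos i) (hsum i) (hD v hv i)⟩
  have hdigits : ∀ l ∈ BWords D k, ∀ i, ∀ j ∈ l.map (· i), 1 ≤ j ∧ j ≤ Nv i := by
    rintro l ⟨-, hl⟩ i j hj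
    obtain ⟨v, hv, rfl⟩ := List.mem_map.mp hj
    exact hD v (hl v hv) i
  refine ⟨_, mem_image_of_mem _ (hK.fixedPt_mem hu (hcontr u hu)),
    _, hK.fixedPt_mem hu' (hcontr u' hu'), funext fun i => ?_⟩
  simp only [psiBW_apply, piB_eq_digitVal, List.map_append, List.map_singleton] at heq hsmall ⊢
  exact (wordMap_fixedPt_eq (hNv i) (hpos i) (hsum i) (by simp [hw.1, hw'.1])
    (hdigits w hw i) (hdigits w' hw' i) (hD u hu i) (hD u' hu' i) (heq i) (hsmall i)).symm

theorem stmt17 (d : ℕ) (Nv : Fin d → ℕ) (p : Fin d → ℕ → ℝ)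
    (D : Finset (Fin d → ℕ)) (hB : BSetup d Nv p D)
    (K : Set (Fin d → ℝ)) (hK : IsBAttractor p D K)
    (k : ℕ) (hk : 1 ≤ k) (w w' : List (Fin d → ℕ))
    (hw : w ∈ BWords D k) (hw' : w' ∈ BWords D k)
    (u u' : Fin d → ℕ) (hu : u ∈ D) (hu' : u' ∈ D)
    (heq : ∀ i, piB Nv (w ++ [u]) i - piB Nv (w' ++ [u']) i =
        piB Nv w i - piB Nv w' i)
    (hne : ∃ i, piB Nv w i ≠ piB Nv w' i)
    (hsmall : ∀ i, |piB Nv w i - piB Nv w' i| ≤ 1) :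
    ((psiBW p w '' K) ∩ (psiBW p w' '' K)).Nonempty :=
  stmt17_general d Nv p D hB K hK k w w' hw hw' u u' hu hu' heq hsmall
end

section
/- Let 𝐰, 𝐰' ∈ D* be words of equal length in the digit set of a Barański sponge in ℝ^d. If ψ_𝐰(Q_d) ∩ ψ_{𝐰'}(Q_d) ≠ ∅, then ψ_𝐰(K) ∩ ψ_{𝐰'}(K) ≠ ∅, where Q_d is the d-th iterate Q_n = ⋃_{w∈D} ψ_w(Q_{n−1}) with Q₀ = [0,1]^d and K is the attractor. -/
open Set

namespace B18

noncomputable def q1 (pp : ℕ → ℝ) (j : ℕ) : ℝ := ∑ l ∈ Finset.Ico 1 j, pp l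

noncomputable def g1 (pp : ℕ → ℝ) (a : List ℕ) (x : ℝ) : ℝ :=
  a.foldr (fun j y => pp j * y + q1 pp j) x

noncomputable def P1 (pp : ℕ → ℝ) (a : List ℕ) : ℝ := (a.map pp).prod

def VD (N : ℕ) (a : List ℕ) : Prop := ∀ j ∈ a, 1 ≤ j ∧ j ≤ N

variable {pp : ℕ → ℝ} {N : ℕ}

lemma g1_nil (x : ℝ) : g1 pp [] x = x := rfl

lemma g1_cons (j : ℕ) (a : List ℕ) (x : ℝ) :
    g1 pp (j :: a) x = pp j * g1 pp a x + q1 pp j := rfl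

lemma g1_append (a b : List ℕ) (x : ℝ) :
    g1 pp (a ++ b) x = g1 pp a (g1 pp b x) := by
  simp [g1, List.foldr_append]

lemma g1_affine (a : List ℕ) (x : ℝ) :
    g1 pp a x = P1 pp a * x + g1 pp a 0 := by
  induction a with
  | nil => simp [g1, P1]
  | cons j a ih =>
    simp only [g1_cons, P1, List.map_cons, List.prod_cons] at *
    rw [ih]; ring

section hyps
variable (hpos : ∀ j, 1 ≤ j → j ≤ N → 0 < pp j)
  (hsum : ∑ j ∈ Finset.Icc 1 N, pp j = 1) (hN : 2 ≤ N)

include hpos in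
lemma P1_pos {a : List ℕ} (ha : VD N a) : 0 < P1 pp a := by
  induction a with
  | nil => simp [P1]
  | cons j a ih =>
    have h := ha j (by simp)
    have h2 : VD N a := fun x hx => ha x (by simp [hx])
    have := ih h2
    simp only [P1, List.map_cons, List.prod_cons] at *
    exact mul_pos (hpos j h.1 h.2) this

include hpos in
lemma q1_nonneg {j : ℕ} (hj : j ≤ N + 1) : 0 ≤ q1 pp j := by
  apply Finset.sum_nonneg
  intro l hl
  simp only [Finset.mem_Ico] at hl
  exact le_of_lt (hpos l hl.1 (by omega))

lemma q1_succ {j : ℕ} (hj : 1 ≤ j) : q1 pp (j + 1) = q1 pp j + pp j :=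
  Finset.sum_Ico_succ_top hj _

include hpos in
lemma q1_mono {j k : ℕ} (hj : 1 ≤ j) (hjk : j ≤ k) (hk : k ≤ N + 1) :
    q1 pp j ≤ q1 pp k := by
  rw [q1, q1, ← Finset.sum_Ico_consecutive pp hj hjk]
  have : 0 ≤ ∑ l ∈ Finset.Ico j k, pp l := by
    apply Finset.sum_nonneg
    intro l hl
    simp only [Finset.mem_Ico] at hl
    exact le_of_lt (hpos l (by omega) (by omega))
  linarith

include hpos hsum in
lemma qp_le_one {j : ℕ} (hj : 1 ≤ j) (hjN : j ≤ N) : q1 pp j + pp j ≤ 1 := by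
  rw [← q1_succ hj]
  have := q1_mono hpos (by omega) (by omega : j + 1 ≤ N + 1) (le_refl (N+1))
  have heq : q1 pp (N + 1) = 1 := by
    rw [q1, Finset.Ico_add_one_right_eq_Icc, hsum]
  linarith

include hpos hsum hN in
lemma pp_lt_one {j : ℕ} (hj : 1 ≤ j) (hjN : j ≤ N) : pp j < 1 := by
  rw [← hsum]
  set j' : ℕ := if j = 1 then 2 else 1 with hj'
  apply Finset.single_lt_sum (i := j) (j := j')
  · by_cases h : j = 1 <;> simp [hj', h] <;> omega
  · simp; omega
  · simp only [Finset.mem_Icc]; by_cases h : j = 1 <;> simp [hj', h] <;> omega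
  · apply hpos <;> (by_cases h : j = 1 <;> simp [hj', h] <;> omega)
  · intro k hk _
    simp only [Finset.mem_Icc] at hk
    exact le_of_lt (hpos k hk.1 hk.2)

include hpos hsum in
lemma bounds {a : List ℕ} (ha : VD N a) :
    0 ≤ g1 pp a 0 ∧ g1 pp a 1 ≤ 1 := by
  induction a with
  | nil => simp [g1]
  | cons j a ih =>
    have hja := ha j (by simp)
    have h2 : VD N a := fun x hx => ha x (by simp [hx])
    obtain ⟨h0, h1⟩ := ih h2
    have hq0 : 0 ≤ q1 pp j := q1_nonneg hpos (by omega)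
    have hqp : q1 pp j + pp j ≤ 1 := qp_le_one hpos hsum hja.1 hja.2
    have hpj : 0 < pp j := hpos j hja.1 hja.2
    constructor
    · rw [g1_cons]; nlinarith
    · rw [g1_cons]; nlinarith

include hpos in
lemma g1_le_iff {a : List ℕ} (ha : VD N a) {x y : ℝ} :
    g1 pp a x ≤ g1 pp a y ↔ x ≤ y := by
  rw [g1_affine a x, g1_affine a y]
  have hP := P1_pos hpos ha
  constructor
  · intro h; nlinarith
  · intro h; nlinarith

include hpos in
lemma g1_inj {a : List ℕ} (ha : VD N a) {x y : ℝ} (h : g1 pp a x = g1 pp a y) : x = y := by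
  have h1 := (g1_le_iff hpos ha).1 h.le
  have h2 := (g1_le_iff hpos ha).1 h.ge
  linarith

include hpos in
lemma g1_mem_Icc {a : List ℕ} (ha : VD N a) {x : ℝ} (hx : x ∈ Set.Icc (0:ℝ) 1) :
    g1 pp a x ∈ Set.Icc (g1 pp a 0) (g1 pp a 1) :=
  ⟨(g1_le_iff hpos ha).2 hx.1, (g1_le_iff hpos ha).2 hx.2⟩

include hpos in
lemma AA_lt_BB {a : List ℕ} (ha : VD N a) : g1 pp a 0 < g1 pp a 1 := by
  rw [g1_affine a 0, g1_affine a 1]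
  have := P1_pos hpos ha
  nlinarith

-- endpoints of child with appended digit
lemma AA_append (a : List ℕ) (s : ℕ) : g1 pp (a ++ [s]) 0 = g1 pp a (q1 pp s) := by
  rw [g1_append]; simp [g1_cons, g1_nil]

lemma BB_append (a : List ℕ) (s : ℕ) :
    g1 pp (a ++ [s]) 1 = g1 pp a (q1 pp s + pp s) := by
  rw [g1_append]; simp [g1_cons, g1_nil]; ring_nf

include hpos hsum in
lemma touch_right {a : List ℕ} (ha : VD N a) {s : ℕ} (hs1 : 1 ≤ s) (hsN : s ≤ N)
    (hx : g1 pp a 1 ∈ Set.Icc (g1 pp (a ++ [s]) 0) (g1 pp (a ++ [s]) 1)) :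
    q1 pp s + pp s = 1 ∧ g1 pp (a ++ [s]) 1 = g1 pp a 1 := by
  rw [AA_append, BB_append] at hx
  have h1 : (1:ℝ) ≤ q1 pp s + pp s := (g1_le_iff hpos ha).1 hx.2
  have h2 : q1 pp s + pp s ≤ 1 := qp_le_one hpos hsum hs1 hsN
  have he : q1 pp s + pp s = 1 := le_antisymm h2 h1
  refine ⟨he, ?_⟩
  rw [BB_append, he]

include hpos in
lemma touch_left {a : List ℕ} (ha : VD N a) {t : ℕ} (ht1 : 1 ≤ t) (htN : t ≤ N)
    (hx : g1 pp a 0 ∈ Set.Icc (g1 pp (a ++ [t]) 0) (g1 pp (a ++ [t]) 1)) :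
    q1 pp t = 0 ∧ g1 pp (a ++ [t]) 0 = g1 pp a 0 := by
  rw [AA_append, BB_append] at hx
  have h1 : q1 pp t ≤ 0 := (g1_le_iff hpos ha).1 hx.1
  have h2 : 0 ≤ q1 pp t := q1_nonneg hpos (by omega)
  have he : q1 pp t = 0 := le_antisymm h1 h2
  refine ⟨he, ?_⟩
  rw [AA_append, he]

include hpos hsum in
lemma sibling {a : List ℕ} (ha : VD N a) {s t : ℕ} (hs1 : 1 ≤ s) (hsN : s ≤ N)
    (ht1 : 1 ≤ t) (htN : t ≤ N) (hst : s < t) {x : ℝ}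
    (hxs : x ∈ Set.Icc (g1 pp (a ++ [s]) 0) (g1 pp (a ++ [s]) 1))
    (hxt : x ∈ Set.Icc (g1 pp (a ++ [t]) 0) (g1 pp (a ++ [t]) 1)) :
    g1 pp (a ++ [s]) 1 = g1 pp (a ++ [t]) 0 ∧ x = g1 pp (a ++ [s]) 1 := by
  have hmid : q1 pp s + pp s ≤ q1 pp t := by
    rw [← q1_succ hs1]
    exact q1_mono hpos (by omega) (by omega) (by omega)
  have h1 : g1 pp (a ++ [s]) 1 ≤ g1 pp (a ++ [t]) 0 := by
    rw [AA_append, BB_append]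
    exact (g1_le_iff hpos ha).2 hmid
  have h2 : x ≤ g1 pp (a ++ [s]) 1 := hxs.2
  have h3 : g1 pp (a ++ [t]) 0 ≤ x := hxt.1
  constructor <;> linarith

include hpos hsum in
lemma trichotomy : ∀ (a b : List ℕ), VD N a → VD N b → a.length = b.length →
    ∀ x : ℝ, x ∈ Set.Icc (g1 pp a 0) (g1 pp a 1) → x ∈ Set.Icc (g1 pp b 0) (g1 pp b 1) →
    a = b ∨ (g1 pp a 1 = g1 pp b 0 ∧ x = g1 pp a 1) ∨
      (g1 pp b 1 = g1 pp a 0 ∧ x = g1 pp b 1) := by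
  intro a
  induction a with
  | nil =>
    intro b _ _ hlen x _ _
    left
    exact (List.length_eq_zero_iff.1 hlen.symm).symm
  | cons j a ih =>
    intro b hja hb hlen x hxa hxb
    match b with
    | [] => simp at hlen
    | j' :: b' =>
      have hj := hja j (by simp)
      have hj' := hb j' (by simp)
      have ha : VD N a := fun y hy => hja y (by simp [hy])
      have hb' : VD N b' := fun y hy => hb y (by simp [hy])
      have hpj : 0 < pp j := hpos j hj.1 hj.2
      have hpj' : 0 < pp j' := hpos j' hj'.1 hj'.2
      have hbnda := bounds hpos hsum ha
      have hbndb := bounds hpos hsum hb'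
      rcases lt_trichotomy j j' with hlt | heq | hgt
      · -- separated / touching: B (j::a) = x = A (j'::b')
        right; left
        have hq0b : 0 ≤ q1 pp j' := q1_nonneg hpos (by omega)
        have hmid : q1 pp j + pp j ≤ q1 pp j' := by
          rw [← q1_succ hj.1]
          exact q1_mono hpos (by omega) (by omega) (by omega)
        have h1 : g1 pp (j :: a) 1 ≤ q1 pp j + pp j := by
          rw [g1_cons]; nlinarith
        have h2 : q1 pp j' ≤ g1 pp (j' :: b') 0 := by
          rw [g1_cons]; nlinarith
        have h3 := hxa.2
        have h4 := hxb.1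
        constructor <;> linarith
      · -- same digit: recurse
        subst heq
        set x' := (x - q1 pp j) / pp j with hx'
        have hxx : x = pp j * x' + q1 pp j := by
          rw [hx', mul_div_assoc', mul_div_cancel_left₀ _ hpj.ne']; ring
        have hxa' : x' ∈ Set.Icc (g1 pp a 0) (g1 pp a 1) := by
          rw [g1_cons, g1_cons] at hxa
          constructor
          · rw [hx', le_div_iff₀ hpj]; linarith [hxa.1]
          · rw [hx', div_le_iff₀ hpj]; linarith [hxa.2]
        have hxb' : x' ∈ Set.Icc (g1 pp b' 0) (g1 pp b' 1) := by
          rw [g1_cons, g1_cons] at hxb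
          constructor
          · rw [hx', le_div_iff₀ hpj]; linarith [hxb.1]
          · rw [hx', div_le_iff₀ hpj]; linarith [hxb.2]
        rcases ih b' ha hb' (by simpa using hlen) x' hxa' hxb' with h | ⟨h1, h2⟩ | ⟨h1, h2⟩
        · left; rw [h]
        · right; left
          constructor
          · rw [g1_cons, g1_cons, h1]
          · rw [g1_cons, hxx, h2]
        · right; right
          constructor
          · rw [g1_cons, g1_cons, h1]
          · rw [g1_cons, hxx, h2]
      · -- symmetric separated
        right; right
        have hq0b : 0 ≤ q1 pp j := q1_nonneg hpos (by omega)
        have hmid : q1 pp j' + pp j' ≤ q1 pp j := by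
          rw [← q1_succ hj'.1]
          exact q1_mono hpos (by omega) (by omega) (by omega)
        have h1 : g1 pp (j' :: b') 1 ≤ q1 pp j' + pp j' := by
          rw [g1_cons]; nlinarith
        have h2 : q1 pp j ≤ g1 pp (j :: a) 0 := by
          rw [g1_cons]; nlinarith
        have h3 := hxb.2
        have h4 := hxa.1
        constructor <;> linarith

end hyps
end B18

-- ===== ambient layer =====
namespace B18

open Filter Topology

variable {d : ℕ}

def strB (u : List (Fin d → ℕ)) (i : Fin d) : List ℕ := u.map (fun w => w i)

lemma strB_append (u v : List (Fin d → ℕ)) (i : Fin d) :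
    strB (u ++ v) i = strB u i ++ strB v i := by simp [strB]

lemma strB_length (u : List (Fin d → ℕ)) (i : Fin d) :
    (strB u i).length = u.length := by simp [strB]

lemma psiBW_apply (p : Fin d → ℕ → ℝ) (l : List (Fin d → ℕ)) (x : Fin d → ℝ) (i : Fin d) :
    psiBW p l x i = g1 (p i) (strB l i) (x i) := by
  induction l with
  | nil => rfl
  | cons w l ih =>
    show psiB p w (psiBW p l x) i = _
    simp only [psiB, strB, List.map_cons, g1_cons, ih]
    rfl

lemma psiBW_append (p : Fin d → ℕ → ℝ) (l₁ l₂ : List (Fin d → ℕ)) :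
    psiBW p (l₁ ++ l₂) = psiBW p l₁ ∘ psiBW p l₂ := by
  induction l₁ with
  | nil => rfl
  | cons w l ih =>
    show psiB p w ∘ psiBW p (l ++ l₂) = (psiB p w ∘ psiBW p l) ∘ psiBW p l₂
    rw [ih]; rfl

lemma psiBW_single (p : Fin d → ℕ → ℝ) (s : Fin d → ℕ) :
    psiBW p [s] = psiB p s := rfl

def dSet (u v : List (Fin d → ℕ)) : Finset (Fin d) :=
  Finset.univ.filter (fun i => strB u i ≠ strB v i)

lemma mem_dSet {u v : List (Fin d → ℕ)} {i : Fin d} :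
    i ∈ dSet u v ↔ strB u i ≠ strB v i := by simp [dSet]

def Gd (p : Fin d → ℕ → ℝ) (x : Fin d → ℝ) (u v : List (Fin d → ℕ)) (i : Fin d) : Prop :=
  strB u i = strB v i ∨
    (g1 (p i) (strB u i) 1 = g1 (p i) (strB v i) 0 ∧ x i = g1 (p i) (strB u i) 1) ∨
    (g1 (p i) (strB v i) 1 = g1 (p i) (strB u i) 0 ∧ x i = g1 (p i) (strB v i) 1)

section Main

variable {Nv : Fin d → ℕ} {p : Fin d → ℕ → ℝ} {D : Finset (Fin d → ℕ)}
  (hB : BSetup d Nv p D)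

include hB

lemma hVD {u : List (Fin d → ℕ)} (hu : ∀ w ∈ u, w ∈ D) (i : Fin d) :
    VD (Nv i) (strB u i) := by
  intro j hj
  simp only [strB, List.mem_map] at hj
  obtain ⟨w, hw, rfl⟩ := hj
  exact hB.2.2.2.2.1 w (hu w hw) i

lemma Qsub {Q : ℕ → Set (Fin d → ℝ)} (hQ0 : Q 0 = Q0B d)
    (hQ : ∀ n, Q (n + 1) = ⋃ w ∈ D, psiB p w '' Q n) :
    ∀ m, Q m ⊆ Q0B d := by
  intro m
  induction m with
  | zero => rw [hQ0]
  | succ m ih =>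
    rw [hQ m]
    intro z hz
    simp only [Set.mem_iUnion] at hz
    obtain ⟨s, hsD, z', hz', rfl⟩ := hz
    have hz0 : z' ∈ Q0B d := ih hz'
    intro i _
    have hs := hB.2.2.2.2.1 s hsD i
    have hz0i := hz0 i (Set.mem_univ i)
    have hq0 : 0 ≤ q1 (p i) (s i) :=
      q1_nonneg (hB.2.2.1 i) (by omega)
    have hqp : q1 (p i) (s i) + p i (s i) ≤ 1 :=
      qp_le_one (hB.2.2.1 i) (hB.2.2.2.1 i) hs.1 hs.2
    have hp : 0 < p i (s i) := hB.2.2.1 i _ hs.1 hs.2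
    simp only [Set.mem_Icc] at hz0i ⊢
    constructor
    · show 0 ≤ p i (s i) * z' i + q1 (p i) (s i)
      nlinarith [hz0i.1, hz0i.2]
    · show p i (s i) * z' i + q1 (p i) (s i) ≤ 1
      nlinarith [hz0i.1, hz0i.2]

lemma mem_img_interval {Q : ℕ → Set (Fin d → ℝ)} (hQ0 : Q 0 = Q0B d)
    (hQ : ∀ n, Q (n + 1) = ⋃ w ∈ D, psiB p w '' Q n)
    {m : ℕ} {u : List (Fin d → ℕ)} (hu : ∀ w ∈ u, w ∈ D)
    {x : Fin d → ℝ} (hx : x ∈ psiBW p u '' Q m) (i : Fin d) :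
    x i ∈ Set.Icc (g1 (p i) (strB u i) 0) (g1 (p i) (strB u i) 1) := by
  obtain ⟨z, hz, rfl⟩ := hx
  have hz0 : z ∈ Q0B d := Qsub hB hQ0 hQ m hz
  rw [psiBW_apply]
  exact g1_mem_Icc (hB.2.2.1 i) (hVD hB hu i) (hz0 i (Set.mem_univ i))

lemma psiB_mem_K {K : Set (Fin d → ℝ)} (hK : IsBAttractor p D K)
    {s : Fin d → ℕ} (hs : s ∈ D) {y : Fin d → ℝ} (hy : y ∈ K) :
    psiB p s y ∈ K := by
  rw [hK.2.2]
  exact Set.mem_biUnion hs ⟨y, hy, rfl⟩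

lemma fix_mem_K {K : Set (Fin d → ℝ)} (hK : IsBAttractor p D K)
    {s : Fin d → ℕ} (hs : s ∈ D) :
    (fun i => q1 (p i) (s i) / (1 - p i (s i))) ∈ K := by
  set y : Fin d → ℝ := fun i => q1 (p i) (s i) / (1 - p i (s i)) with hy
  have hplt : ∀ i, p i (s i) < 1 := fun i =>
    pp_lt_one (hB.2.2.1 i) (hB.2.2.2.1 i) (hB.2.1 i)
      (hB.2.2.2.2.1 s hs i).1 (hB.2.2.2.2.1 s hs i).2
  have hppos : ∀ i, 0 < p i (s i) := fun i =>
    hB.2.2.1 i _ (hB.2.2.2.2.1 s hs i).1 (hB.2.2.2.2.1 s hs i).2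
  have hfix : ∀ i, p i (s i) * y i + q1 (p i) (s i) = y i := by
    intro i
    have h1 : (1 : ℝ) - p i (s i) ≠ 0 := by have := hplt i; intro h; linarith [h]
    simp only [hy]; rw [eq_div_iff h1, add_mul, mul_assoc, div_mul_cancel₀ _ h1]; ring
  obtain ⟨y₀, hy₀⟩ := hK.1
  have hiter : ∀ n, (psiB p s)^[n] y₀ ∈ K := by
    intro n
    induction n with
    | zero => simpa using hy₀
    | succ n ih =>
      rw [Function.iterate_succ_apply']
      exact psiB_mem_K hB hK hs ih
  have hform : ∀ n (i : Fin d),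
      (psiB p s)^[n] y₀ i = y i + (p i (s i)) ^ n * (y₀ i - y i) := by
    intro n
    induction n with
    | zero => intro i; simp
    | succ n ih =>
      intro i
      rw [Function.iterate_succ_apply']
      show p i (s i) * ((psiB p s)^[n] y₀ i) + q1 (p i) (s i) = _
      rw [ih i]
      have := hfix i
      ring_nf
      ring_nf at this
      nlinarith [this]
  have htend : Tendsto (fun n => (psiB p s)^[n] y₀) atTop (𝓝 y) := by
    rw [tendsto_pi_nhds]
    intro i
    have h1 : Tendsto (fun n : ℕ => (p i (s i)) ^ n) atTop (𝓝 0) :=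
      tendsto_pow_atTop_nhds_zero_of_lt_one (le_of_lt (hppos i)) (hplt i)
    have h2 : Tendsto (fun n : ℕ => y i + (p i (s i)) ^ n * (y₀ i - y i)) atTop
        (𝓝 (y i + 0 * (y₀ i - y i))) :=
      ((h1.mul_const _).const_add _)
    simp only [zero_mul, add_zero] at h2
    convert h2 using 2
    exact hform _ i
  exact hK.2.1.isClosed.mem_of_tendsto htend (Filter.Eventually.of_forall hiter)

lemma main_rec {K : Set (Fin d → ℝ)} (hK : IsBAttractor p D K)
    {Q : ℕ → Set (Fin d → ℝ)} (hQ0 : Q 0 = Q0B d)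
    (hQ : ∀ n, Q (n + 1) = ⋃ w ∈ D, psiB p w '' Q n)
    (x : Fin d → ℝ) :
    ∀ (m : ℕ) (u v : List (Fin d → ℕ)), (∀ w ∈ u, w ∈ D) → (∀ w ∈ v, w ∈ D) →
    u.length = v.length →
    x ∈ psiBW p u '' Q m → x ∈ psiBW p v '' Q m →
    (∀ i, Gd p x u v i) →
    d + 1 ≤ m + (dSet u v).card →
    ∃ y ∈ K, ∃ y' ∈ K, psiBW p u y = psiBW p v y' := by
  intro m
  induction m with
  | zero =>
    intro u v _ _ _ _ _ _ hcount
    exfalso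
    have h1 : (dSet u v).card ≤ d := by
      have := Finset.card_le_univ (dSet u v)
      simpa using this
    omega
  | succ m ih =>
    intro u v hu hv hlen hxu hxv hG hcount
    -- descend one level on both sides
    obtain ⟨z, hz, hzx⟩ := hxu
    rw [hQ m] at hz
    simp only [Set.mem_iUnion] at hz
    obtain ⟨s, hsD, z', hz', hzeq⟩ := hz
    obtain ⟨zz, hzz, hzzx⟩ := hxv
    rw [hQ m] at hzz
    simp only [Set.mem_iUnion] at hzz
    obtain ⟨t, htD, zz', hzz', hzzeq⟩ := hzz
    have hu' : ∀ w ∈ u ++ [s], w ∈ D := by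
      intro w hw
      rcases List.mem_append.1 hw with h | h
      · exact hu w h
      · simp at h; subst h; exact hsD
    have hv' : ∀ w ∈ v ++ [t], w ∈ D := by
      intro w hw
      rcases List.mem_append.1 hw with h | h
      · exact hv w h
      · simp at h; subst h; exact htD
    have hxu' : x ∈ psiBW p (u ++ [s]) '' Q m := by
      refine ⟨z', hz', ?_⟩
      rw [psiBW_append, Function.comp_apply, psiBW_single, hzeq, hzx]
    have hxv' : x ∈ psiBW p (v ++ [t]) '' Q m := by
      refine ⟨zz', hzz', ?_⟩
      rw [psiBW_append, Function.comp_apply, psiBW_single, hzzeq, hzzx]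
    have hIu : ∀ i, x i ∈ Set.Icc (g1 (p i) (strB (u ++ [s]) i) 0)
        (g1 (p i) (strB (u ++ [s]) i) 1) :=
      mem_img_interval hB hQ0 hQ hu' hxu'
    have hIv : ∀ i, x i ∈ Set.Icc (g1 (p i) (strB (v ++ [t]) i) 0)
        (g1 (p i) (strB (v ++ [t]) i) 1) :=
      mem_img_interval hB hQ0 hQ hv' hxv'
    have hsval := hB.2.2.2.2.1 s hsD
    have htval := hB.2.2.2.2.1 t htD
    have hpos : ∀ i : Fin d, ∀ j, 1 ≤ j → j ≤ Nv i → 0 < p i j := hB.2.2.1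
    have hsum : ∀ i : Fin d, ∑ j ∈ Finset.Icc 1 (Nv i), p i j = 1 := hB.2.2.2.1
    -- Good preservation
    have hG' : ∀ i, Gd p x (u ++ [s]) (v ++ [t]) i := by
      intro i
      have hIui := hIu i
      have hIvi := hIv i
      rw [strB_append] at hIui hIvi
      rcases hG i with he | ⟨h1, h2⟩ | ⟨h1, h2⟩
      · -- equal strings at parent level
        by_cases hst : s i = t i
        · left
          have he' : List.map (fun w => w i) u = List.map (fun w => w i) v := he
          simp [strB_append, strB, he', hst]
        · rcases Nat.lt_or_ge (s i) (t i) with hlt | hge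
          · right; left
            have hIvi' : x i ∈ Set.Icc (g1 (p i) (strB u i ++ strB [t] i) 0)
                (g1 (p i) (strB u i ++ strB [t] i) 1) := by rw [he]; exact hIvi
            have hsib := sibling (hpos i) (hsum i) (hVD hB hu i)
              (hsval i).1 (hsval i).2 (htval i).1 (htval i).2 hlt
              (x := x i) (by simpa [strB] using hIui) (by simpa [strB] using hIvi')
            rw [strB_append, strB_append, ← he]
            simpa [strB] using hsib
          · have hlt : t i < s i := by omega
            right; right
            have hIui' : x i ∈ Set.Icc (g1 (p i) (strB v i ++ strB [s] i) 0)
                (g1 (p i) (strB v i ++ strB [s] i) 1) := by rw [← he]; exact hIui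
            have hsib := sibling (hpos i) (hsum i) (hVD hB hv i)
              (htval i).1 (htval i).2 (hsval i).1 (hsval i).2 hlt
              (x := x i) (by simpa [strB] using hIvi) (by simpa [strB] using hIui')
            rw [strB_append, strB_append, he]
            simpa [strB] using hsib
      · -- touch: u on the left
        have htr := touch_right (hpos i) (hsum i) (hVD hB hu i) (hsval i).1 (hsval i).2
          (a := strB u i) (s := s i) (by rw [← h2]; simpa [strB] using hIui)
        have htl := touch_left (hpos i) (hVD hB hv i) (htval i).1 (htval i).2
          (a := strB v i) (t := t i) (by rw [← h1, ← h2]; simpa [strB] using hIvi)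
        right; left
        rw [strB_append, strB_append]
        have e1 : strB [s] i = [s i] := rfl
        have e2 : strB [t] i = [t i] := rfl
        rw [e1, e2, htr.2, htl.2]
        exact ⟨h1, h2⟩
      · -- touch: v on the left
        have htr := touch_right (hpos i) (hsum i) (hVD hB hv i) (htval i).1 (htval i).2
          (a := strB v i) (s := t i) (by rw [← h2]; simpa [strB] using hIvi)
        have htl := touch_left (hpos i) (hVD hB hu i) (hsval i).1 (hsval i).2
          (a := strB u i) (t := s i) (by rw [← h1, ← h2]; simpa [strB] using hIui)
        right; right
        rw [strB_append, strB_append]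
        have e1 : strB [s] i = [s i] := rfl
        have e2 : strB [t] i = [t i] := rfl
        rw [e1, e2, htr.2, htl.2]
        exact ⟨h1, h2⟩
    -- the difference set is monotone
    have hmono : dSet u v ⊆ dSet (u ++ [s]) (v ++ [t]) := by
      intro i hi
      rw [mem_dSet] at hi ⊢
      intro hc
      rw [strB_append, strB_append] at hc
      have hl : (strB u i).length = (strB v i).length := by
        rw [strB_length, strB_length, hlen]
      exact hi (List.append_inj hc hl).1
    by_cases hstab : dSet (u ++ [s]) (v ++ [t]) = dSet u v
    · -- stabilization: extract points of K
      set y : Fin d → ℝ := fun i => q1 (p i) (s i) / (1 - p i (s i)) with hydef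
      set y' : Fin d → ℝ := fun i => q1 (p i) (t i) / (1 - p i (t i)) with hy'def
      have hyK : y ∈ K := fix_mem_K hB hK hsD
      have hy'K : y' ∈ K := fix_mem_K hB hK htD
      have hplt : ∀ i, p i (s i) < 1 := fun i =>
        pp_lt_one (hpos i) (hsum i) (hB.2.1 i) (hsval i).1 (hsval i).2
      have hplt' : ∀ i, p i (t i) < 1 := fun i =>
        pp_lt_one (hpos i) (hsum i) (hB.2.1 i) (htval i).1 (htval i).2
      have key : psiBW p (u ++ [s]) y = psiBW p (v ++ [t]) y' := by
        funext i
        rw [psiBW_apply, psiBW_apply]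
        by_cases hi : strB u i = strB v i
        · -- equal strings: digits must agree
          have hns : i ∉ dSet (u ++ [s]) (v ++ [t]) := by
            rw [hstab, mem_dSet]; simpa using hi
          rw [mem_dSet] at hns
          push_neg at hns
          rw [hns]
          have hst : s i = t i := by
            rw [strB_append, strB_append] at hns
            have hl : (strB u i).length = (strB v i).length := by
              rw [strB_length, strB_length, hlen]
            have := (List.append_inj hns hl).2
            have e1 : strB [s] i = [s i] := rfl
            have e2 : strB [t] i = [t i] := rfl
            rw [e1, e2] at this
            exact List.singleton_inj.1 this
          have : y i = y' i := by rw [hydef, hy'def]; simp only; rw [hst]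
          rw [this]
        · -- touching strings
          have hIui := hIu i
          have hIvi := hIv i
          rw [strB_append] at hIui hIvi
          rcases hG i with he | ⟨h1, h2⟩ | ⟨h1, h2⟩
          · exact absurd he hi
          · have htr := touch_right (hpos i) (hsum i) (hVD hB hu i) (hsval i).1 (hsval i).2
              (a := strB u i) (s := s i) (by rw [← h2]; simpa [strB] using hIui)
            have htl := touch_left (hpos i) (hVD hB hv i) (htval i).1 (htval i).2
              (a := strB v i) (t := t i) (by rw [← h1, ← h2]; simpa [strB] using hIvi)
            have hy1 : y i = 1 := by
              rw [hydef]; simp only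
              have h1s : (1 : ℝ) - p i (s i) ≠ 0 := by
                have := hplt i; intro h; linarith [h]
              field_simp
              linarith [htr.1]
            have hy0 : y' i = 0 := by
              rw [hy'def]; simp only
              rw [htl.1]; simp
            rw [hy1, hy0, strB_append, strB_append]
            have e1 : strB [s] i = [s i] := rfl
            have e2 : strB [t] i = [t i] := rfl
            rw [e1, e2, htr.2, htl.2, h1]
          · have htr := touch_right (hpos i) (hsum i) (hVD hB hv i) (htval i).1 (htval i).2
              (a := strB v i) (s := t i) (by rw [← h2]; simpa [strB] using hIvi)
            have htl := touch_left (hpos i) (hVD hB hu i) (hsval i).1 (hsval i).2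
              (a := strB u i) (t := s i) (by rw [← h1, ← h2]; simpa [strB] using hIui)
            have hy1 : y' i = 1 := by
              rw [hy'def]; simp only
              have h1s : (1 : ℝ) - p i (t i) ≠ 0 := by
                have := hplt' i; intro h; linarith [h]
              field_simp
              linarith [htr.1]
            have hy0 : y i = 0 := by
              rw [hydef]; simp only
              rw [htl.1]; simp
            rw [hy1, hy0, strB_append, strB_append]
            have e1 : strB [s] i = [s i] := rfl
            have e2 : strB [t] i = [t i] := rfl
            rw [e1, e2, htr.2, htl.2, h1]
      refine ⟨psiB p s y, psiB_mem_K hB hK hsD hyK, psiB p t y', psiB_mem_K hB hK htD hy'K, ?_⟩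
      have e1 : psiBW p u (psiB p s y) = psiBW p (u ++ [s]) y := by
        rw [psiBW_append, psiBW_single]; rfl
      have e2 : psiBW p v (psiB p t y') = psiBW p (v ++ [t]) y' := by
        rw [psiBW_append, psiBW_single]; rfl
      rw [e1, e2, key]
    · -- strict growth: recurse
      have hss : dSet u v ⊂ dSet (u ++ [s]) (v ++ [t]) :=
        ⟨hmono, fun h => hstab (le_antisymm h hmono)⟩
      have hcard := Finset.card_lt_card hss
      have hlen' : (u ++ [s]).length = (v ++ [t]).length := by
        simp [hlen]
      obtain ⟨y, hy, y', hy', heq⟩ := ih (u ++ [s]) (v ++ [t]) hu' hv' hlen' hxu' hxv' hG'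
        (by omega)
      refine ⟨psiB p s y, psiB_mem_K hB hK hsD hy, psiB p t y', psiB_mem_K hB hK htD hy', ?_⟩
      have e1 : psiBW p u (psiB p s y) = psiBW p (u ++ [s]) y := by
        rw [psiBW_append, psiBW_single]; rfl
      have e2 : psiBW p v (psiB p t y') = psiBW p (v ++ [t]) y' := by
        rw [psiBW_append, psiBW_single]; rfl
      rw [e1, e2, heq]

end Main
end B18

theorem stmt18 (d : ℕ) (Nv : Fin d → ℕ) (p : Fin d → ℕ → ℝ)
    (D : Finset (Fin d → ℕ)) (hB : BSetup d Nv p D)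
    (K : Set (Fin d → ℝ)) (hK : IsBAttractor p D K)
    (Q : ℕ → Set (Fin d → ℝ)) (hQ0 : Q 0 = Q0B d)
    (hQ : ∀ n, Q (n + 1) = ⋃ w ∈ D, psiB p w '' Q n)
    (k : ℕ) (hk : 1 ≤ k) (w w' : List (Fin d → ℕ))
    (hw : w ∈ BWords D k) (hw' : w' ∈ BWords D k)
    (hint : ((psiBW p w '' Q d) ∩ (psiBW p w' '' Q d)).Nonempty) :
    ((psiBW p w '' K) ∩ (psiBW p w' '' K)).Nonempty := by
  obtain ⟨x, hx1, hx2⟩ := hint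
  by_cases hww : w = w'
  · subst hww
    obtain ⟨y, hy⟩ := hK.1
    exact ⟨psiBW p w y, ⟨y, hy, rfl⟩, ⟨y, hy, rfl⟩⟩
  · have hlen : w.length = w'.length := by rw [hw.1, hw'.1]
    have hG : ∀ i, B18.Gd p x w w' i := by
      intro i
      exact B18.trichotomy (hB.2.2.1 i) (hB.2.2.2.1 i) _ _ (B18.hVD hB hw.2 i)
        (B18.hVD hB hw'.2 i) (by simp [B18.strB, hlen]) (x i)
        (B18.mem_img_interval hB hQ0 hQ hw.2 hx1 i)
        (B18.mem_img_interval hB hQ0 hQ hw'.2 hx2 i)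
    have hne : (B18.dSet w w').Nonempty := by
      by_contra h
      apply hww
      have hall : ∀ i, B18.strB w i = B18.strB w' i := by
        intro i
        by_contra hc
        exact h ⟨i, B18.mem_dSet.2 hc⟩
      apply List.ext_getElem hlen
      intro n h1 h2
      funext i
      have hn := congrArg (fun l => l[n]?) (hall i)
      simp only [B18.strB, List.getElem?_map] at hn
      rw [List.getElem?_eq_getElem h1, List.getElem?_eq_getElem h2] at hn
      simpa using hn
    have hcard : 1 ≤ (B18.dSet w w').card := Finset.card_pos.2 hne
    obtain ⟨y, hy, y', hy', heq⟩ := B18.main_rec hB hK hQ0 hQ x d w w'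
      hw.2 hw'.2 hlen hx1 hx2 hG (by omega)
    exact ⟨psiBW p w y, ⟨y, hy, rfl⟩, ⟨y', hy', heq.symm⟩⟩
end
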